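/- arXiv:1401.4623 — 8 statements merged into one kernel-verified Lean document; each statement's English description precedes it below -/
import Mathlib

section
/- Let G be a vertex-transitive graph (its automorphism group acts transitively on vertices). Then for any vertex g of G, the magnitude of G is |G|(q) = v(G) / (∑_{x ∈ V(G)} q^{d(g,x)}), where v(G) is the number of vertices of G. -/
open scoped Classical in
/-- `q ^ d` for an extended natural number `d`, with the convention `q ^ ∞ = 0`. -/
noncomputable def qExp (d : ℕ∞) : RatFunc ℚ :=
  if d = ⊤ then 0 else RatFunc.X ^ d.toNat

/-- The matrix `Z_G(q)` whose `(x, y)` entry is `q ^ d(x, y)`. -/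
noncomputable def magMatrix {V : Type*} [Fintype V] (G : SimpleGraph V) :
    Matrix V V (RatFunc ℚ) :=
  Matrix.of fun x y => qExp (G.edist x y)

/-- The magnitude of a graph: the sum of all entries of `Z_G(q)⁻¹`. -/
noncomputable def magnitude {V : Type*} [Fintype V] [DecidableEq V] (G : SimpleGraph V) :
    RatFunc ℚ :=
  ∑ x, ∑ y, (magMatrix G)⁻¹ x y

/-- The weighting of a graph: `w_G x` is the `x`-th row sum of `Z_G(q)⁻¹`. -/
noncomputable def weighting {V : Type*} [Fintype V] [DecidableEq V] (G : SimpleGraph V)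
    (x : V) : RatFunc ℚ :=
  ∑ y, (magMatrix G)⁻¹ x y

open scoped Classical in
/-- Polynomial version of `qExp`. -/
noncomputable def pExp (d : ℕ∞) : Polynomial ℚ :=
  if d = ⊤ then 0 else Polynomial.X ^ d.toNat

lemma qExp_eq_algebraMap (d : ℕ∞) :
    qExp d = algebraMap (Polynomial ℚ) (RatFunc ℚ) (pExp d) := by
  unfold qExp pExp
  split <;> simp [RatFunc.algebraMap_X]

lemma pExp_eval_zero {V : Type*} [DecidableEq V] (G : SimpleGraph V) (x y : V) :
    Polynomial.eval 0 (pExp (G.edist x y)) = if x = y then 1 else 0 := by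
  unfold pExp
  rcases eq_or_ne x y with rfl | hxy
  · simp [SimpleGraph.edist_self]
  · rcases eq_or_ne (G.edist x y) ⊤ with h | h
    · simp [h, hxy]
    · have h0 : G.edist x y ≠ 0 := by
        simp [SimpleGraph.edist_eq_zero_iff, hxy]
      have : (G.edist x y).toNat ≠ 0 := by
        intro hc
        exact h0 ((ENat.toNat_eq_zero.mp hc).resolve_right h)
      simp [h, hxy, zero_pow this]

lemma sum_comm3 {V : Type*} [Fintype V] {M : Type*} [AddCommMonoid M] (f : V → V → V → M) :
    ∑ x, ∑ y, ∑ z, f x y z = ∑ z, ∑ y, ∑ x, f x y z := by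
  calc ∑ x, ∑ y, ∑ z, f x y z
      = ∑ x, ∑ z, ∑ y, f x y z := Finset.sum_congr rfl fun x _ => Finset.sum_comm
    _ = ∑ z, ∑ x, ∑ y, f x y z := Finset.sum_comm
    _ = ∑ z, ∑ y, ∑ x, f x y z := Finset.sum_congr rfl fun z _ => Finset.sum_comm

lemma edist_iso_le {V : Type*} (G : SimpleGraph V) (φ : G ≃g G) (u v : V) :
    G.edist (φ u) (φ v) ≤ G.edist u v := by
  rcases eq_or_ne (G.edist u v) ⊤ with h | h
  · simp [h]
  · obtain ⟨p, hp⟩ := G.exists_walk_of_edist_ne_top h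
    calc G.edist (φ u) (φ v) ≤ (p.map φ.toHom).length := SimpleGraph.edist_le _
    _ = G.edist u v := by rw [SimpleGraph.Walk.length_map, hp]

lemma edist_iso {V : Type*} (G : SimpleGraph V) (φ : G ≃g G) (u v : V) :
    G.edist (φ u) (φ v) = G.edist u v := by
  refine le_antisymm (edist_iso_le G φ u v) ?_
  have := edist_iso_le G φ.symm (φ u) (φ v)
  simpa using this

lemma magMatrix_det_ne_zero {V : Type*} [Fintype V] [DecidableEq V] (G : SimpleGraph V) :
    (magMatrix G).det ≠ 0 := by
  set Zp : Matrix V V (Polynomial ℚ) := Matrix.of fun x y => pExp (G.edist x y) with hZp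
  have hmap : magMatrix G = Zp.map (algebraMap (Polynomial ℚ) (RatFunc ℚ)) := by
    ext x y
    simp [magMatrix, hZp, Matrix.map, qExp_eq_algebraMap]
  have hdet : (magMatrix G).det = algebraMap (Polynomial ℚ) (RatFunc ℚ) Zp.det := by
    rw [hmap]
    exact (RingHom.map_det (algebraMap (Polynomial ℚ) (RatFunc ℚ)) Zp).symm
  have heval : Polynomial.eval 0 Zp.det = 1 := by
    have : Zp.map (Polynomial.evalRingHom (0 : ℚ)) = 1 := by
      ext x y
      simp [hZp, Matrix.map, pExp_eval_zero, Matrix.one_apply]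
    calc Polynomial.eval 0 Zp.det = (Zp.map (Polynomial.evalRingHom (0 : ℚ))).det :=
          RingHom.map_det (Polynomial.evalRingHom (0 : ℚ)) Zp
    _ = 1 := by rw [this, Matrix.det_one]
  have hZpdet : Zp.det ≠ 0 := by
    intro hc
    rw [hc] at heval
    simp at heval
  rw [hdet]
  exact fun hc => hZpdet (RatFunc.algebraMap_injective (K := ℚ) (by simpa using hc))

/-- The magnitude of a vertex-transitive graph. -/
theorem magnitude_of_vertexTransitive
    {V : Type*} [Fintype V] [DecidableEq V] (G : SimpleGraph V)
    (htrans : ∀ g g' : V, ∃ φ : G ≃g G, φ g = g') (g : V) :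
    magnitude G = (Fintype.card V : RatFunc ℚ) / ∑ x : V, qExp (G.edist g x) := by
  cases isEmpty_or_nonempty V with
  | inl h =>
    simp [magnitude, Fintype.card_eq_zero]
  | inr h =>
    set Z := magMatrix G with hZ
    set s : RatFunc ℚ := ∑ x : V, qExp (G.edist g x) with hs
    -- all column sums of Z equal s
    have hcol : ∀ y : V, ∑ x : V, Z x y = s := by
      intro y
      obtain ⟨φ, hφ⟩ := htrans g y
      calc ∑ x : V, Z x y = ∑ x : V, qExp (G.edist y x) := by
            simp [hZ, magMatrix, SimpleGraph.edist_comm]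
      _ = ∑ x : V, qExp (G.edist (φ g) (φ x)) := by
            rw [← hφ]
            exact (Equiv.sum_comp φ.toEquiv fun x => qExp (G.edist (φ g) x)).symm
      _ = s := by simp [edist_iso, hs]
    have hinv : Z * Z⁻¹ = 1 :=
      Matrix.mul_nonsing_inv Z (isUnit_iff_ne_zero.mpr (magMatrix_det_ne_zero G))
    have key : s * magnitude G = (Fintype.card V : RatFunc ℚ) := by
      calc s * magnitude G = ∑ x : V, ∑ y : V, (∑ z : V, Z z x) * Z⁻¹ x y := by
            simp only [magnitude, ← hZ, hcol, Finset.mul_sum]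
      _ = ∑ z : V, ∑ y : V, (Z * Z⁻¹) z y := by
            simp only [Matrix.mul_apply, Finset.sum_mul]
            exact sum_comm3 fun x y z => Z z x * Z⁻¹ x y
      _ = (Fintype.card V : RatFunc ℚ) := by
            rw [hinv]
            have h1 : ∀ z : V, ∑ y : V, (1 : Matrix V V (RatFunc ℚ)) z y = 1 := by
              intro z
              simp [Matrix.one_apply]
            rw [Finset.sum_congr rfl fun z _ => h1 z, Finset.sum_const,
              Finset.card_univ, nsmul_eq_mul, mul_one]
    -- s ≠ 0
    have hs0 : s ≠ 0 := by
      have : s = algebraMap (Polynomial ℚ) (RatFunc ℚ) (∑ x : V, pExp (G.edist g x)) := by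
        rw [map_sum]; simp [hs, qExp_eq_algebraMap]
      have hp : Polynomial.eval 0 (∑ x : V, pExp (G.edist g x)) = 1 := by
        rw [Polynomial.eval_finset_sum]
        rw [Finset.sum_congr rfl fun x _ => pExp_eval_zero G g x]
        simp
      intro hc
      have h0 : (∑ x : V, pExp (G.edist g x)) = 0 :=
        RatFunc.algebraMap_injective (K := ℚ) (by rw [← this, hc, map_zero])
      rw [h0] at hp
      simp at hp
    rw [eq_div_iff hs0, ← key]
    ring
end

section
/- For every integer n ≥ 3, the cycle graph C_n on n vertices has magnitude |C_n|(q) = n(q − 1) / (q^{⌊(n+1)/2⌋} + q^{⌈(n+1)/2⌉} − q − 1) in ℚ(q); equivalently, |C_n|(q) = n(q−1)/((q^{n/2} − 1)(q + 1)) if n is even and |C_n|(q) = n(q−1)/(2q^{(n+1)/2} − q − 1) if n is odd. -/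
open SimpleGraph Finset
open Fin.NatCast Fin.CommRing


namespace MagAux

lemma cg_adj {m : ℕ} (w : Fin (m+3)) : (cycleGraph (m+3)).Adj w (w+1) := by
  rw [cycleGraph_adj']
  right
  simp

lemma edist_ub (m : ℕ) (u : Fin (m+3)) (k : ℕ) :
    (cycleGraph (m+3)).edist u (u + (k : Fin (m+3))) ≤ k := by
  induction k with
  | zero => simp [SimpleGraph.edist_self]
  | succ k ih =>
    have h : (u + ((k+1 : ℕ) : Fin (m+3))) = (u + (k : Fin (m+3))) + 1 := by
      push_cast; ring
    rw [h]
    calc (cycleGraph (m+3)).edist u ((u + (k : Fin (m+3))) + 1)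
        ≤ (cycleGraph (m+3)).edist u (u + (k : Fin (m+3)))
          + (cycleGraph (m+3)).edist (u + (k : Fin (m+3))) ((u + (k : Fin (m+3))) + 1) :=
          SimpleGraph.edist_triangle
      _ ≤ (k : ℕ∞) + 1 := by
          exact add_le_add ih (le_of_eq (edist_eq_one_iff_adj.mpr (cg_adj _)))
      _ = ((k+1 : ℕ) : ℕ∞) := by push_cast; ring

end MagAux

namespace MagAux2

lemma val_sub_one {m : ℕ} (x : Fin (m+3)) :
    (x - 1).val = (x.val + (m + 2)) % (m+3) := by
  rw [Fin.sub_def]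
  simp [Fin.val_one, Nat.add_comm]

lemma val_add_one {m : ℕ} (x : Fin (m+3)) :
    (x + 1).val = (x.val + 1) % (m+3) := by
  rw [Fin.add_def]
  simp [Fin.val_one]

lemma lip {m : ℕ} (v u w : Fin (m+3)) (h : (cycleGraph (m+3)).Adj u w) :
    min (v-u).val ((m+3) - (v-u).val) ≤ min (v-w).val ((m+3) - (v-w).val) + 1 := by
  have hb : (v-w).val < m + 3 := (v-w).isLt
  rw [cycleGraph_adj'] at h
  rcases h with h | h
  · have h1 : u - w = 1 := by
      apply Fin.val_injective
      rw [h]; simp [Fin.val_one]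
    have h2 : v - u = (v - w) - 1 := by rw [← h1]; ring
    rw [h2, val_sub_one]
    set b := (v-w).val
    rcases Nat.eq_zero_or_pos b with hb0 | hb1
    · have e : (b + (m+2)) % (m+3) = m + 2 := by
        rw [hb0, Nat.zero_add]; exact Nat.mod_eq_of_lt (by omega)
      rw [e]; omega
    · have e : (b + (m+2)) % (m+3) = b - 1 := by
        have e2 : b + (m+2) = (m+3) + (b - 1) := by omega
        rw [e2, Nat.add_mod_left, Nat.mod_eq_of_lt (by omega)]
      rw [e]; omega
  · have h1 : w - u = 1 := by
      apply Fin.val_injective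
      rw [h]; simp [Fin.val_one]
    have h2 : v - u = (v - w) + 1 := by
      have e : u = w - 1 := by rw [← h1]; ring
      rw [e]; ring
    rw [h2, val_add_one]
    set b := (v-w).val
    rcases Nat.lt_or_ge (b+1) (m+3) with hlt | hge
    · rw [Nat.mod_eq_of_lt hlt]; omega
    · have hbe : b + 1 = m+3 := by omega
      rw [hbe, Nat.mod_self]; omega

lemma edist_lb {m : ℕ} {v u : Fin (m+3)} (p : (cycleGraph (m+3)).Walk u v) :
    min (v-u).val ((m+3) - (v-u).val) ≤ p.length := by
  induction p with
  | nil => simp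
  | @cons a b c h p ih =>
    rw [SimpleGraph.Walk.length_cons]
    calc min (c-a).val ((m+3) - (c-a).val)
        ≤ min (c-b).val ((m+3) - (c-b).val) + 1 := lip c a b h
      _ ≤ p.length + 1 := Nat.add_le_add_right ih 1

end MagAux2

namespace MagAux2

lemma val_sub_of_ne {m : ℕ} {u v : Fin (m+3)} (hne : v ≠ u) :
    (u - v).val = (m+3) - (v-u).val := by
  have ha : (v - u) ≠ 0 := sub_ne_zero.mpr hne
  have ha1 : (v-u).val ≠ 0 := by
    intro h0
    exact ha (Fin.val_injective (by simpa using h0))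
  have e : u - v = -(v - u) := by ring
  rw [e, Fin.neg_def]
  simp only []
  exact Nat.mod_eq_of_lt (by omega)

lemma cycle_edist {m : ℕ} (u v : Fin (m+3)) :
    (SimpleGraph.cycleGraph (m+3)).edist u v
      = ((min (v-u).val ((m+3) - (v-u).val) : ℕ) : ℕ∞) := by
  apply le_antisymm
  · rcases eq_or_ne v u with rfl | hne
    · simp [SimpleGraph.edist_self]
    · have b1 : (SimpleGraph.cycleGraph (m+3)).edist u v ≤ ((v-u).val : ℕ∞) := by
        have h := MagAux.edist_ub m u ((v-u).val)
        rw [Fin.cast_val_eq_self] at h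
        have e : u + (v - u) = v := by ring
        rwa [e] at h
      have b2 : (SimpleGraph.cycleGraph (m+3)).edist u v ≤ (((m+3) - (v-u).val : ℕ) : ℕ∞) := by
        have h := MagAux.edist_ub m v ((u-v).val)
        rw [Fin.cast_val_eq_self] at h
        have e : v + (u - v) = u := by ring
        rw [e] at h
        rw [SimpleGraph.edist_comm]
        rwa [val_sub_of_ne hne] at h
      rcases min_cases ((v-u).val) ((m+3) - (v-u).val) with ⟨he, _⟩ | ⟨he, _⟩ <;> rw [he]
      · exact b1
      · exact b2
  · obtain ⟨p, hp⟩ := SimpleGraph.cycleGraph_connected.exists_walk_length_eq_edist u v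
    rw [← hp]
    exact_mod_cast edist_lb p

end MagAux2


open Finset Polynomial

namespace MagAux3

lemma keysum (n : ℕ) (hn : 3 ≤ n) :
    (∑ k ∈ Finset.range n, (RatFunc.X : RatFunc ℚ) ^ (min k (n - k))) * (RatFunc.X - 1)
      = RatFunc.X ^ ((n+2)/2) + RatFunc.X ^ ((n+1)/2) - RatFunc.X - 1 := by
  set X : RatFunc ℚ := RatFunc.X with hX
  set m := n / 2 with hm
  have hsplit : ∑ k ∈ Finset.range n, X ^ (min k (n - k))
      = (∑ k ∈ Finset.Ico 0 (m+1), X ^ (min k (n-k)))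
        + ∑ k ∈ Finset.Ico (m+1) n, X ^ (min k (n-k)) := by
    rw [Finset.range_eq_Ico, ← Finset.sum_Ico_consecutive _ (Nat.zero_le (m+1)) (show m+1 ≤ n by omega)]
  have e1 : ∑ k ∈ Finset.Ico 0 (m+1), X ^ (min k (n-k)) = ∑ k ∈ Finset.range (m+1), X ^ k := by
    rw [← Finset.range_eq_Ico]
    refine Finset.sum_congr rfl fun k hk => ?_
    rw [Finset.mem_range] at hk
    congr 1
    omega
  have e2 : ∑ k ∈ Finset.Ico (m+1) n, X ^ (min k (n-k)) = ∑ j ∈ Finset.Ico 1 (n - m), X ^ j := by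
    refine Finset.sum_nbij' (fun k => n - k) (fun j => n - j) ?_ ?_ ?_ ?_ ?_
    · intro a ha; simp only [Finset.mem_Ico] at *; omega
    · intro a ha; simp only [Finset.mem_Ico] at *; omega
    · intro a ha; simp only [Finset.mem_Ico] at ha; omega
    · intro a ha; simp only [Finset.mem_Ico] at ha; omega
    · intro a ha; simp only [Finset.mem_Ico] at ha; congr 1; omega
  have e3 : ∑ j ∈ Finset.Ico 1 (n - m), X ^ j = (∑ j ∈ Finset.range (n-m), X ^ j) - 1 := by
    rw [Finset.range_eq_Ico, ← Finset.sum_Ico_consecutive _ (Nat.zero_le 1) (show 1 ≤ n - m by omega)]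
    have : ∑ j ∈ Finset.Ico 0 1, X ^ j = 1 := by simp
    rw [this]
    ring
  rw [hsplit, e1, e2, e3, add_mul, sub_mul, geom_sum_mul, geom_sum_mul, one_mul]
  have hm1 : m + 1 = (n+2)/2 := by omega
  have hnm : n - m = (n+1)/2 := by omega
  rw [hm1, hnm]
  ring

lemma denom_ne_zero (n : ℕ) (hn : 3 ≤ n) :
    (RatFunc.X : RatFunc ℚ) ^ ((n+1)/2) + RatFunc.X ^ ((n+2)/2) - RatFunc.X - 1 ≠ 0 := by
  set a := (n+1)/2 with hadef
  set b := (n+2)/2 with hbdef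
  have ha : 2 ≤ a := by omega
  have hb : 2 ≤ b := by omega
  have key : (RatFunc.X : RatFunc ℚ) ^ a + RatFunc.X ^ b - RatFunc.X - 1
      = algebraMap ℚ[X] (RatFunc ℚ) (X ^ a + X ^ b - X - 1) := by
    simp only [map_add, map_sub, map_pow, map_one, RatFunc.algebraMap_X]
  rw [key]
  apply RatFunc.algebraMap_ne_zero
  intro h
  have hc := congrArg (fun p => Polynomial.coeff p 1) h
  simp only [Polynomial.coeff_add, Polynomial.coeff_sub, Polynomial.coeff_X_pow,
    Polynomial.coeff_X_one, Polynomial.coeff_one, Polynomial.coeff_zero] at hc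
  rw [if_neg (by omega), if_neg (by omega), if_neg (by omega)] at hc
  norm_num at hc

end MagAux3



namespace MagAux4

open Finset SimpleGraph

lemma qExp_coe (k : ℕ) : qExp (k : ℕ∞) = RatFunc.X ^ k := by
  simp [qExp]

lemma magMatrix_cycle {m : ℕ} (u v : Fin (m+3)) :
    magMatrix (cycleGraph (m+3)) u v
      = RatFunc.X ^ (min (v-u).val ((m+3) - (v-u).val)) := by
  rw [magMatrix, Matrix.of_apply, MagAux2.cycle_edist, qExp_coe]

lemma det_ne_zero (m : ℕ) :
    (magMatrix (cycleGraph (m+3))).det ≠ 0 := by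
  set P : Matrix (Fin (m+3)) (Fin (m+3)) (Polynomial ℚ) :=
    Matrix.of fun u v => Polynomial.X ^ (min (v-u).val ((m+3) - (v-u).val)) with hP
  have hmap : magMatrix (cycleGraph (m+3))
      = P.map (algebraMap (Polynomial ℚ) (RatFunc ℚ)) := by
    ext u v
    rw [magMatrix_cycle, Matrix.map_apply, hP, Matrix.of_apply, map_pow, RatFunc.algebraMap_X]
  have hPdet : P.det ≠ 0 := by
    intro h
    have h0 : ((Polynomial.evalRingHom (0:ℚ)).mapMatrix P).det = 0 := by
      rw [← RingHom.map_det]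
      simp only [Polynomial.coe_evalRingHom, h, Polynomial.eval_zero]
    have hone : (Polynomial.evalRingHom (0:ℚ)).mapMatrix P = 1 := by
      ext u v
      rw [RingHom.mapMatrix_apply, Matrix.map_apply, hP, Matrix.of_apply, Matrix.one_apply]
      rcases eq_or_ne u v with rfl | hne
      · simp
      · have h1 : (v - u) ≠ 0 := sub_ne_zero.mpr (Ne.symm hne)
        have h2 : (v - u).val ≠ 0 := by
          intro h0'
          exact h1 (Fin.val_injective (by simpa using h0'))
        have h3 : (v - u).val < m + 3 := (v-u).isLt
        rw [if_neg hne]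
        simp only [map_pow, Polynomial.coe_evalRingHom, Polynomial.eval_X]
        rw [zero_pow (by omega)]
    rw [hone, Matrix.det_one] at h0
    exact one_ne_zero h0
  rw [hmap, show P.map ⇑(algebraMap (Polynomial ℚ) (RatFunc ℚ))
      = (algebraMap (Polynomial ℚ) (RatFunc ℚ)).mapMatrix P
    from (RingHom.mapMatrix_apply _ _).symm, ← RingHom.map_det]
  exact RatFunc.algebraMap_ne_zero hPdet

lemma rowsum (m : ℕ) (u : Fin (m+3)) :
    ∑ v, magMatrix (cycleGraph (m+3)) u v
      = ∑ k ∈ Finset.range (m+3), RatFunc.X ^ (min k ((m+3) - k)) := by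
  calc ∑ v, magMatrix (cycleGraph (m+3)) u v
      = ∑ v : Fin (m+3), RatFunc.X ^ (min (v-u).val ((m+3) - (v-u).val)) := by
        refine Finset.sum_congr rfl fun v _ => magMatrix_cycle u v
    _ = ∑ w : Fin (m+3), RatFunc.X ^ (min w.val ((m+3) - w.val)) :=
        Fintype.sum_equiv (Equiv.subRight u) _ _ (fun v => rfl)
    _ = ∑ k ∈ Finset.range (m+3), RatFunc.X ^ (min k ((m+3) - k)) :=
        Fin.sum_univ_eq_sum_range (fun k => RatFunc.X ^ (min k ((m+3) - k))) (m+3)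

end MagAux4

/-- The magnitude of the cycle graph on `n ≥ 3` vertices. -/
theorem magnitude_cycleGraph (n : ℕ) (hn : 3 ≤ n) :
    magnitude (SimpleGraph.cycleGraph n) =
      (n : RatFunc ℚ) * (RatFunc.X - 1) /
        (RatFunc.X ^ ((n + 1) / 2) + RatFunc.X ^ ((n + 2) / 2) - RatFunc.X - 1) ∧
    (Even n → magnitude (SimpleGraph.cycleGraph n) =
      (n : RatFunc ℚ) * (RatFunc.X - 1) /
        ((RatFunc.X ^ (n / 2) - 1) * (RatFunc.X + 1))) ∧
    (Odd n → magnitude (SimpleGraph.cycleGraph n) =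
      (n : RatFunc ℚ) * (RatFunc.X - 1) /
        (2 * RatFunc.X ^ ((n + 1) / 2) - RatFunc.X - 1)) := by
  obtain ⟨m, rfl⟩ : ∃ m, n = m + 3 := ⟨n - 3, by omega⟩
  set n := m + 3 with hndef
  set X : RatFunc ℚ := RatFunc.X with hX
  set S : RatFunc ℚ := ∑ k ∈ Finset.range n, X ^ (min k (n - k)) with hS
  set D : RatFunc ℚ := X ^ ((n+1)/2) + X ^ ((n+2)/2) - X - 1 with hD
  have hn : 3 ≤ n := by omega
  have hkey : S * (X - 1) = D := by
    rw [hS, hD, MagAux3.keysum n hn]; ring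
  have hDne : D ≠ 0 := MagAux3.denom_ne_zero n hn
  have hSne : S ≠ 0 := by
    intro h
    apply hDne
    rw [← hkey, h, zero_mul]
  set Z := magMatrix (SimpleGraph.cycleGraph n) with hZ
  have hdet : IsUnit Z.det := isUnit_iff_ne_zero.mpr (MagAux4.det_ne_zero m)
  have hZinv : Z⁻¹ * Z = 1 := Matrix.nonsing_inv_mul Z hdet
  have hrowinv : ∀ x : Fin n, ∑ y, Z⁻¹ x y = S⁻¹ := by
    intro x
    have key : (∑ y, Z⁻¹ x y) * S = 1 := by
      calc (∑ y, Z⁻¹ x y) * S = ∑ y, Z⁻¹ x y * S := Finset.sum_mul _ _ _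
        _ = ∑ y, Z⁻¹ x y * ∑ z, Z y z := by
            refine Finset.sum_congr rfl fun y _ => ?_
            rw [MagAux4.rowsum m y]
        _ = ∑ y, ∑ z, Z⁻¹ x y * Z y z := by
            refine Finset.sum_congr rfl fun y _ => Finset.mul_sum _ _ _
        _ = ∑ z, ∑ y, Z⁻¹ x y * Z y z := Finset.sum_comm
        _ = ∑ z, (Z⁻¹ * Z) x z := by
            refine Finset.sum_congr rfl fun z _ => ?_
            rw [Matrix.mul_apply]
        _ = ∑ z, (1 : Matrix (Fin n) (Fin n) (RatFunc ℚ)) x z := by rw [hZinv]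
        _ = 1 := by simp [Matrix.one_apply]
    exact eq_inv_of_mul_eq_one_right (by rw [mul_comm]; exact key)
  have hmag : magnitude (SimpleGraph.cycleGraph n) = (n : RatFunc ℚ) * S⁻¹ := by
    rw [magnitude]
    calc ∑ x : Fin n, ∑ y, (magMatrix (SimpleGraph.cycleGraph n))⁻¹ x y
        = ∑ _x : Fin n, S⁻¹ := Finset.sum_congr rfl fun x _ => hrowinv x
      _ = (n : RatFunc ℚ) * S⁻¹ := by
          rw [Finset.sum_const, Finset.card_univ, Fintype.card_fin, nsmul_eq_mul]
  have hXone : X - 1 ≠ 0 := by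
    have hp : (Polynomial.X - 1 : Polynomial ℚ) ≠ 0 := by
      simpa using Polynomial.X_sub_C_ne_zero (1 : ℚ)
    have : X - 1 = algebraMap (Polynomial ℚ) (RatFunc ℚ) (Polynomial.X - 1) := by
      rw [hX]; simp [RatFunc.algebraMap_X]
    rw [this]
    exact RatFunc.algebraMap_ne_zero hp
  have hmain : magnitude (SimpleGraph.cycleGraph n) = (n : RatFunc ℚ) * (X - 1) / D := by
    rw [hmag, eq_div_iff hDne, ← hkey]
    field_simp
  refine ⟨hmain, ?_, ?_⟩
  · intro he
    obtain ⟨t, ht⟩ := he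
    have h1 : (n+1)/2 = t := by omega
    have h2 : (n+2)/2 = t+1 := by omega
    have h3 : n/2 = t := by omega
    rw [hmain, hD, h1, h2, h3, pow_succ]
    ring_nf
  · intro ho
    obtain ⟨t, ht⟩ := ho
    have h1 : (n+1)/2 = t+1 := by omega
    have h2 : (n+2)/2 = t+1 := by omega
    rw [hmain, hD, h1, h2]
    ring_nf
end

section
/- For all positive integers m and n, the complete bipartite graph K_{m,n} has magnitude |K_{m,n}|(q) = ((m + n) − (2mn − m − n)q) / ((1 + q)(1 − (m − 1)(n − 1)q²)) in ℚ(q). -/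
lemma qExp_zero : qExp 0 = 1 := by simp [qExp]
lemma qExp_one : qExp 1 = RatFunc.X := by
  rw [qExp, if_neg (by decide)]; norm_num
lemma qExp_two : qExp 2 = RatFunc.X ^ 2 := by
  rw [qExp, if_neg (by decide)]; norm_num

lemma ratfunc_poly_ne_zero (p : Polynomial ℚ) (hp : p.coeff 0 ≠ 0) :
    algebraMap (Polynomial ℚ) (RatFunc ℚ) p ≠ 0 :=
  RatFunc.algebraMap_ne_zero (fun h => hp (by simp [h]))

lemma one_sub_c_mul_X_sq_ne_zero (c : ℚ) :
    (1 : RatFunc ℚ) - algebraMap ℚ (RatFunc ℚ) c * RatFunc.X ^ 2 ≠ 0 := by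
  have h : (1 : RatFunc ℚ) - algebraMap ℚ (RatFunc ℚ) c * RatFunc.X ^ 2
      = algebraMap (Polynomial ℚ) (RatFunc ℚ) (1 - Polynomial.C c * Polynomial.X ^ 2) := by
    simp [map_sub, map_mul, map_pow, RatFunc.algebraMap_X, RatFunc.algebraMap_C]
  rw [h]; exact ratfunc_poly_ne_zero _ (by simp)

lemma one_add_X_ne_zero : (1 : RatFunc ℚ) + RatFunc.X ≠ 0 := by
  have h : (1 : RatFunc ℚ) + RatFunc.X
      = algebraMap (Polynomial ℚ) (RatFunc ℚ) (1 + Polynomial.X) := by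
    simp [map_add, RatFunc.algebraMap_X]
  rw [h]; exact ratfunc_poly_ne_zero _ (by simp)

lemma sum_ite_mul_ite {K : Type*} [Field K] {N : ℕ} (i j : Fin N) (u v s t : K) :
    ∑ k : Fin N, (if i = k then u else v) * (if k = j then s else t) =
      (N : K) * v * t + (u - v) * t + v * (s - t) +
        (if i = j then (u - v) * (s - t) else 0) := by
  have h : ∀ k : Fin N, (if i = k then u else v) * (if k = j then s else t)
      = v * t + ((if i = k then (u - v) * t else 0) + ((if k = j then v * (s - t) else 0)
        + (if i = k then (if k = j then (u - v) * (s - t) else 0) else 0))) := by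
    intro k
    by_cases h2 : k = j
    · subst h2
      by_cases h1 : i = k <;> simp [h1] <;> ring
    · by_cases h1 : i = k
      · subst h1; simp [h2]; ring
      · simp [h1, h2]
  rw [Finset.sum_congr rfl fun k _ => h k]
  rw [Finset.sum_add_distrib, Finset.sum_add_distrib, Finset.sum_add_distrib]
  simp only [Finset.sum_ite_eq, Finset.sum_ite_eq', Finset.mem_univ, if_true,
    Finset.sum_const, Finset.card_univ, Fintype.card_fin, nsmul_eq_mul]
  ring

lemma sum_ite_const {K : Type*} [Field K] {N : ℕ} (i : Fin N) (u v : K) :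
    ∑ k : Fin N, (if i = k then u else v) = (N : K) * v + (u - v) := by
  have := sum_ite_mul_ite i i u v 1 1
  simpa using this


set_option maxHeartbeats 2000000 in
/-- The magnitude of the complete bipartite graph `K_{m,n}`. -/
theorem magnitude_completeBipartiteGraph (m n : ℕ) (hm : 0 < m) (hn : 0 < n) :
    magnitude (completeBipartiteGraph (Fin m) (Fin n)) =
      ((m : RatFunc ℚ) + (n : RatFunc ℚ) -
          (2 * (m : RatFunc ℚ) * (n : RatFunc ℚ) - (m : RatFunc ℚ) - (n : RatFunc ℚ)) *
            RatFunc.X) /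
        ((1 + RatFunc.X) *
          (1 - ((m : RatFunc ℚ) - 1) * ((n : RatFunc ℚ) - 1) * RatFunc.X ^ 2)) := by
  classical
  set G := completeBipartiteGraph (Fin m) (Fin n) with hG
  -- distance lemmas
  have i0 : Fin m := ⟨0, hm⟩
  have j0 : Fin n := ⟨0, hn⟩
  have hedLL : ∀ i j : Fin m, i ≠ j → G.edist (Sum.inl i) (Sum.inl j) = 2 := by
    intro i j h
    have a1 : G.Adj (Sum.inl i) (Sum.inr j0) := by simp [hG]
    have a2 : G.Adj (Sum.inr j0) (Sum.inl j) := by simp [hG]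
    have hle : G.edist (Sum.inl i) (Sum.inl j) ≤ 2 := by
      have := G.edist_le (SimpleGraph.Walk.cons a1 (SimpleGraph.Walk.cons a2 SimpleGraph.Walk.nil))
      simpa using this
    have h0 : G.edist (Sum.inl i) (Sum.inl j) ≠ 0 := by
      simp [SimpleGraph.edist_eq_zero_iff, h]
    have h1 : G.edist (Sum.inl i) (Sum.inl j) ≠ 1 := by
      rw [ne_eq, SimpleGraph.edist_eq_one_iff_adj]; simp [hG]
    have hne : G.edist (Sum.inl i) (Sum.inl j) ≠ ⊤ := by
      intro ht; rw [ht] at hle; exact absurd hle (by simp)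
    lift G.edist (Sum.inl i) (Sum.inl j) to ℕ using hne with k hk
    norm_cast at *
    omega
  have hedRR : ∀ i j : Fin n, i ≠ j → G.edist (Sum.inr i) (Sum.inr j) = 2 := by
    intro i j h
    have a1 : G.Adj (Sum.inr i) (Sum.inl i0) := by simp [hG]
    have a2 : G.Adj (Sum.inl i0) (Sum.inr j) := by simp [hG]
    have hle : G.edist (Sum.inr i) (Sum.inr j) ≤ 2 := by
      have := G.edist_le (SimpleGraph.Walk.cons a1 (SimpleGraph.Walk.cons a2 SimpleGraph.Walk.nil))
      simpa using this
    have h0 : G.edist (Sum.inr i) (Sum.inr j) ≠ 0 := by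
      simp [SimpleGraph.edist_eq_zero_iff, h]
    have h1 : G.edist (Sum.inr i) (Sum.inr j) ≠ 1 := by
      rw [ne_eq, SimpleGraph.edist_eq_one_iff_adj]; simp [hG]
    have hne : G.edist (Sum.inr i) (Sum.inr j) ≠ ⊤ := by
      intro ht; rw [ht] at hle; exact absurd hle (by simp)
    lift G.edist (Sum.inr i) (Sum.inr j) to ℕ using hne with k hk
    norm_cast at *
    omega
  -- matrix entry lemmas
  have hLL : ∀ i j : Fin m, magMatrix G (Sum.inl i) (Sum.inl j)
      = if i = j then 1 else RatFunc.X ^ 2 := by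
    intro i j
    rcases eq_or_ne i j with rfl | h
    · simp [magMatrix, SimpleGraph.edist_self, qExp_zero]
    · simp [magMatrix, hedLL i j h, qExp_two, h]
  have hRR : ∀ i j : Fin n, magMatrix G (Sum.inr i) (Sum.inr j)
      = if i = j then 1 else RatFunc.X ^ 2 := by
    intro i j
    rcases eq_or_ne i j with rfl | h
    · simp [magMatrix, SimpleGraph.edist_self, qExp_zero]
    · simp [magMatrix, hedRR i j h, qExp_two, h]
  have hLR : ∀ (i : Fin m) (j : Fin n), magMatrix G (Sum.inl i) (Sum.inr j) = RatFunc.X := by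
    intro i j
    have ha : G.Adj (Sum.inl i) (Sum.inr j) := by simp [hG]
    simp [magMatrix, SimpleGraph.edist_eq_one_iff_adj.mpr ha, qExp_one]
  have hRL : ∀ (i : Fin n) (j : Fin m), magMatrix G (Sum.inr i) (Sum.inl j) = RatFunc.X := by
    intro i j
    have ha : G.Adj (Sum.inr i) (Sum.inl j) := by simp [hG]
    simp [magMatrix, SimpleGraph.edist_eq_one_iff_adj.mpr ha, qExp_one]
  -- constants
  set q : RatFunc ℚ := RatFunc.X with hq
  have hE0 : (1 : RatFunc ℚ) - q ^ 2 ≠ 0 := by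
    have := one_sub_c_mul_X_sq_ne_zero 1
    simpa [hq] using this
  have hD0 : (1 : RatFunc ℚ) - ((m : RatFunc ℚ) - 1) * ((n : RatFunc ℚ) - 1) * q ^ 2 ≠ 0 := by
    have h := one_sub_c_mul_X_sq_ne_zero (((m : ℚ) - 1) * ((n : ℚ) - 1))
    have hc : algebraMap ℚ (RatFunc ℚ) (((m : ℚ) - 1) * ((n : ℚ) - 1))
        = ((m : RatFunc ℚ) - 1) * ((n : RatFunc ℚ) - 1) := by
      push_cast [map_mul, map_sub, map_one, map_natCast]
      ring
    rw [hc] at h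
    simpa [hq] using h
  have h1X : (1 : RatFunc ℚ) + q ≠ 0 := one_add_X_ne_zero
  set E : RatFunc ℚ := 1 - q ^ 2 with hE
  set D : RatFunc ℚ := 1 - ((m : RatFunc ℚ) - 1) * ((n : RatFunc ℚ) - 1) * q ^ 2 with hD
  set a : RatFunc ℚ := 1 / E with ha
  set e : RatFunc ℚ := -q / (E * D) with he
  set b : RatFunc ℚ := ((n : RatFunc ℚ) - 1) * q ^ 2 / (E * D) with hb
  set d : RatFunc ℚ := ((m : RatFunc ℚ) - 1) * q ^ 2 / (E * D) with hd
  set W : Matrix (Fin m ⊕ Fin n) (Fin m ⊕ Fin n) (RatFunc ℚ) :=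
    Matrix.of (fun x y =>
      match x, y with
      | Sum.inl i, Sum.inl j => if i = j then a + b else b
      | Sum.inl _, Sum.inr _ => e
      | Sum.inr _, Sum.inl _ => e
      | Sum.inr i, Sum.inr j => if i = j then a + d else d) with hW
  have hWll : ∀ i j : Fin m, W (Sum.inl i) (Sum.inl j) = if i = j then a + b else b := fun _ _ => rfl
  have hWlr : ∀ (i : Fin m) (j : Fin n), W (Sum.inl i) (Sum.inr j) = e := fun _ _ => rfl
  have hWrl : ∀ (i : Fin n) (j : Fin m), W (Sum.inr i) (Sum.inl j) = e := fun _ _ => rfl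
  have hWrr : ∀ i j : Fin n, W (Sum.inr i) (Sum.inr j) = if i = j then a + d else d := fun _ _ => rfl
  have sum_ite_const' : ∀ {N : ℕ} (j : Fin N) (s t : RatFunc ℚ),
      ∑ k : Fin N, (if k = j then s else t) = (N : RatFunc ℚ) * t + (s - t) := by
    intro N j s t
    have := sum_ite_mul_ite j j 1 1 s t
    simpa using this
  have hZW : magMatrix G * W = 1 := by
    ext x y
    rw [Matrix.mul_apply, Fintype.sum_sum_type]
    cases x with
    | inl i =>
      cases y with
      | inl j =>
        simp only [hLL, hLR, hWll, hWrl]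
        rw [sum_ite_mul_ite, Finset.sum_const, Finset.card_univ, Fintype.card_fin,
          nsmul_eq_mul, Matrix.one_apply]
        rcases eq_or_ne i j with rfl | hij
        · rw [if_pos rfl, if_pos rfl, ha, hb, he]
          field_simp
          ring
        · rw [if_neg hij, if_neg (by simp [hij]), ha, hb, he]
          field_simp
          ring
      | inr j =>
        simp only [hLL, hLR, hWlr, hWrr]
        rw [Matrix.one_apply, if_neg (by simp), ← Finset.sum_mul, ← Finset.mul_sum,
          sum_ite_const, sum_ite_const']
        rw [ha, hd, he]
        field_simp
        ring
    | inr i =>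
      cases y with
      | inl j =>
        simp only [hRL, hRR, hWll, hWrl]
        rw [Matrix.one_apply, if_neg (by simp), ← Finset.sum_mul, ← Finset.mul_sum,
          sum_ite_const, sum_ite_const']
        rw [ha, hb, he]
        field_simp
        ring
      | inr j =>
        simp only [hRL, hRR, hWlr, hWrr]
        rw [sum_ite_mul_ite, Finset.sum_const, Finset.card_univ, Fintype.card_fin,
          nsmul_eq_mul, Matrix.one_apply]
        rcases eq_or_ne i j with rfl | hij
        · rw [if_pos rfl, if_pos rfl, ha, hd, he]
          field_simp
          ring
        · rw [if_neg hij, if_neg (by simp [hij]), ha, hd, he]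
          field_simp
          ring
  have hinv : (magMatrix G)⁻¹ = W := Matrix.inv_eq_right_inv hZW
  unfold magnitude
  rw [hinv, Fintype.sum_sum_type]
  have hrow1 : ∀ i : Fin m, ∑ y, W (Sum.inl i) y
      = ((m : RatFunc ℚ) * b + (a + b - b)) + (n : RatFunc ℚ) * e := by
    intro i
    rw [Fintype.sum_sum_type]
    simp only [hWll, hWlr]
    rw [sum_ite_const, Finset.sum_const, Finset.card_univ, Fintype.card_fin, nsmul_eq_mul]
  have hrow2 : ∀ i : Fin n, ∑ y, W (Sum.inr i) y
      = (m : RatFunc ℚ) * e + ((n : RatFunc ℚ) * d + (a + d - d)) := by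
    intro i
    rw [Fintype.sum_sum_type]
    simp only [hWrl, hWrr]
    rw [sum_ite_const, Finset.sum_const, Finset.card_univ, Fintype.card_fin, nsmul_eq_mul]
  simp only [hrow1, hrow2, Finset.sum_const, Finset.card_univ, Fintype.card_fin, nsmul_eq_mul]
  rw [ha, hb, hd, he, hE, hq]
  have hE0' : (1 : RatFunc ℚ) - RatFunc.X ^ 2 ≠ 0 := hE0
  have h1X' : (1 : RatFunc ℚ) + RatFunc.X ≠ 0 := h1X
  clear_value D
  field_simp
  rw [hD, hq]
  ring
end

section
/- For any graphs G and H, the magnitude of their cartesian (box) product satisfies |G □ H|(q) = |G|(q) · |H|(q) in ℚ(q). -/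
section Aux

open SimpleGraph

variable {α β : Type*} {G : SimpleGraph α} {H : SimpleGraph β}

/-- Each step of a walk on `G □ H` is either a `G`-step or an `H`-step, so the lengths of the
two projections add up to the length of the walk. -/
lemma length_ofBoxProd [DecidableEq α] [DecidableEq β]
    [DecidableRel G.Adj] [DecidableRel H.Adj] :
    ∀ {x y : α × β} (w : (G □ H).Walk x y),
      w.ofBoxProdLeft.length + w.ofBoxProdRight.length = w.length := by
  intro x y w
  induction w with
  | nil => rfl
  | @cons u v z h w ih =>
    obtain ⟨u1, u2⟩ := u
    obtain ⟨v1, v2⟩ := v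
    rw [Walk.ofBoxProdLeft, Walk.ofBoxProdRight]; unfold Or.by_cases
    by_cases hG : G.Adj u1 v1 ∧ u2 = v2
    · obtain ⟨hadj, rfl⟩ := hG
      have hH : ¬(H.Adj u2 u2 ∧ u1 = v1) := by simp
      rw [dif_pos ⟨hadj, rfl⟩, dif_neg hH]
      simp [← ih]
      ring
    · have hH : H.Adj u2 v2 ∧ u1 = v1 := (h.resolve_left hG)
      obtain ⟨hadj, rfl⟩ := hH
      rw [dif_neg hG, dif_pos ⟨hadj, rfl⟩]
      simp [← ih]
      ring

/-- The distance formula for the box product: distances add. -/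
lemma boxProd_edist (x y : α × β) :
    (G □ H).edist x y = G.edist x.1 y.1 + H.edist x.2 y.2 := by
  classical
  obtain ⟨x1, x2⟩ := x
  obtain ⟨y1, y2⟩ := y
  refine le_antisymm ?_ ?_
  · rcases eq_or_ne (G.edist x1 y1) ⊤ with h1 | h1
    · simp [h1]
    rcases eq_or_ne (H.edist x2 y2) ⊤ with h2 | h2
    · simp [h2]
    obtain ⟨p, hp⟩ := exists_walk_of_edist_ne_top h1
    obtain ⟨q, hq⟩ := exists_walk_of_edist_ne_top h2
    calc (G □ H).edist (x1, x2) (y1, y2)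
        ≤ ((p.boxProdLeft H x2).append (q.boxProdRight G y1)).length := edist_le _
      _ = G.edist x1 y1 + H.edist x2 y2 := by
          rw [Walk.length_append, show (p.boxProdLeft H x2).length = p.length from Walk.length_map _ _,
            show (q.boxProdRight G y1).length = q.length from Walk.length_map _ _, Nat.cast_add, hp, hq]
  · rcases eq_or_ne ((G □ H).edist (x1, x2) (y1, y2)) ⊤ with h | h
    · simp [h]
    obtain ⟨w, hw⟩ := exists_walk_of_edist_ne_top h
    calc G.edist x1 y1 + H.edist x2 y2
        ≤ (w.ofBoxProdLeft.length : ℕ∞) + w.ofBoxProdRight.length :=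
          add_le_add (edist_le _) (edist_le _)
      _ = (w.length : ℕ∞) := by rw [← Nat.cast_add, length_ofBoxProd]
      _ = _ := hw

lemma qExp_add (a b : ℕ∞) : qExp (a + b) = qExp a * qExp b := by
  rcases eq_or_ne a ⊤ with rfl | ha
  · simp [qExp]
  rcases eq_or_ne b ⊤ with rfl | hb
  · rw [add_top]; simp [qExp]
  rw [qExp, qExp, qExp, if_neg ha, if_neg hb, if_neg (by simp [ha, hb] : ¬(a + b = ⊤)),
    ENat.toNat_add ha hb, pow_add]

end Aux

open Kronecker in
/-- The magnitude of the cartesian (box) product of graphs is the product of the magnitudes. -/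
theorem magnitude_boxProd
    {V W : Type*} [Fintype V] [DecidableEq V] [Fintype W] [DecidableEq W]
    (G : SimpleGraph V) (H : SimpleGraph W) :
    magnitude (G.boxProd H) = magnitude G * magnitude H := by
  have hmat : magMatrix (G.boxProd H) = magMatrix G ⊗ₖ magMatrix H := by
    ext ⟨a, b⟩ ⟨c, d⟩
    simp [magMatrix, Matrix.kroneckerMap_apply, boxProd_edist, qExp_add]
  rw [magnitude, hmat, Matrix.inv_kronecker]
  simp only [magnitude, Fintype.sum_prod_type, Matrix.kroneckerMap_apply,
    Finset.sum_mul_sum]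
end

section
/- Let G be a graph. The magnitude |G|(q), expanded as a formal power series ∑_{n=0}^∞ c_n q^n with integer coefficients, has coefficients given for each n ≥ 0 by c_n = ∑_{k=0}^n (−1)^k · #{(x_0, x_1, …, x_k) ∈ V(G)^{k+1} : x_0 ≠ x_1, x_1 ≠ x_2, …, x_{k−1} ≠ x_k, and d(x_0,x_1) + d(x_1,x_2) + ⋯ + d(x_{k−1},x_k) = n}, where each tuple counted has all consecutive distances finite. -/
open scoped Classical

noncomputable def psM {V : Type*} [Fintype V] (G : SimpleGraph V) :
    Matrix V V (PowerSeries ℚ) :=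
  Matrix.of fun x y => if G.edist x y = ⊤ then 0 else PowerSeries.X ^ (G.edist x y).toNat

noncomputable def psN {V : Type*} [Fintype V] [DecidableEq V] (G : SimpleGraph V) :
    Matrix V V (PowerSeries ℚ) := psM G - 1

lemma psM_constantCoeff {V : Type*} [Fintype V] [DecidableEq V] (G : SimpleGraph V) (x y : V) :
    PowerSeries.constantCoeff (R := ℚ) (psM G x y) = if x = y then 1 else 0 := by
  simp only [psM, Matrix.of_apply]
  by_cases h : G.edist x y = ⊤
  · rw [if_pos h, map_zero]
    have hxy : x ≠ y := by
      rintro rfl; rw [SimpleGraph.edist_self] at h; exact (by simp : (0:ℕ∞) ≠ ⊤) h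
    simp [hxy]
  · rw [if_neg h, ← PowerSeries.coeff_zero_eq_constantCoeff, PowerSeries.coeff_X_pow]
    have : 0 = (G.edist x y).toNat ↔ x = y := by
      rw [eq_comm, ENat.toNat_eq_zero, or_iff_left h, SimpleGraph.edist_eq_zero_iff]

    simp only [this]

lemma psN_apply {V : Type*} [Fintype V] [DecidableEq V] (G : SimpleGraph V) (x y : V) :
    psN G x y = if x = y then 0 else psM G x y := by
  by_cases hxy : x = y
  · subst hxy
    simp [psN, psM, Matrix.sub_apply, Matrix.one_apply_eq, SimpleGraph.edist_self]
  · simp [psN, Matrix.sub_apply, Matrix.one_apply_ne hxy, hxy]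

lemma psN_constantCoeff {V : Type*} [Fintype V] [DecidableEq V] (G : SimpleGraph V) (x y : V) :
    PowerSeries.constantCoeff (R := ℚ) (psN G x y) = 0 := by
  rw [psN_apply]
  by_cases hxy : x = y
  · simp [hxy]
  · rw [if_neg hxy, psM_constantCoeff, if_neg hxy]

lemma psN_pow_coeff_eq_zero {V : Type*} [Fintype V] [DecidableEq V] (G : SimpleGraph V) :
    ∀ (k : ℕ) (x y : V) (j : ℕ), j < k → PowerSeries.coeff j ((psN G ^ k) x y) = 0 := by
  intro k
  induction k with
  | zero => intro x y j hj; omega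
  | succ k ih =>
    intro x y j hj
    rw [pow_succ, Matrix.mul_apply, map_sum]
    refine Finset.sum_eq_zero fun z _ => ?_
    rw [PowerSeries.coeff_mul]
    refine Finset.sum_eq_zero fun p hp => ?_
    rcases Finset.HasAntidiagonal.mem_antidiagonal.mp hp with h
    by_cases h1 : p.1 < k
    · rw [ih x z p.1 h1, zero_mul]
    · have : p.2 = 0 ∨ p.1 < k := by omega
      rcases this with h2 | h2
      · rw [h2, PowerSeries.coeff_zero_eq_constantCoeff, psN_constantCoeff, mul_zero]
      · exact absurd h2 h1

lemma psN_pow_tuple_sum {V : Type*} [Fintype V] [DecidableEq V] (G : SimpleGraph V) :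
    ∀ (k : ℕ) (w : V → PowerSeries ℚ),
      ∑ a, ∑ b, (psN G ^ k) a b * w b =
      ∑ y : Fin (k + 1) → V,
        (∏ i : Fin k, psN G (y i.castSucc) (y i.succ)) * w (y (Fin.last k)) := by
  intro k
  induction k with
  | zero =>
    intro w
    rw [pow_zero]
    simp only [Matrix.one_apply, ite_mul, one_mul, zero_mul, Finset.sum_ite_eq,
      Finset.mem_univ, if_true]
    exact (Fintype.sum_equiv (Equiv.funUnique (Fin 1) V)
      (fun y : Fin 1 → V => (∏ i : Fin 0, psN G (y i.castSucc) (y i.succ)) * w (y (Fin.last 0)))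
      w (fun y => by simp [Fin.last])).symm
  | succ k ih =>
    intro w
    have step : ∑ a, ∑ b, (psN G ^ (k + 1)) a b * w b
        = ∑ a, ∑ z, (psN G ^ k) a z * (∑ b, psN G z b * w b) := by
      simp only [pow_succ, Matrix.mul_apply, Finset.sum_mul, Finset.mul_sum, mul_assoc]
      rw [Finset.sum_congr rfl fun a _ => Finset.sum_comm]
    rw [step, ih]
    have e := Fin.snocEquiv (fun _ : Fin (k + 2) => V)
    calc ∑ y : Fin (k + 1) → V,
          (∏ i : Fin k, psN G (y i.castSucc) (y i.succ)) * ∑ b, psN G (y (Fin.last k)) b * w b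
        = ∑ p : V × (Fin (k + 1) → V),
            (∏ i : Fin k, psN G (p.2 i.castSucc) (p.2 i.succ)) *
              (psN G (p.2 (Fin.last k)) p.1 * w p.1) := by
          rw [Fintype.sum_prod_type, Finset.sum_comm]
          exact Finset.sum_congr rfl fun y _ => by rw [Finset.mul_sum]
      _ = ∑ x : Fin (k + 2) → V,
            (∏ i : Fin (k + 1), psN G (x i.castSucc) (x i.succ)) * w (x (Fin.last (k + 1))) := by
          refine Fintype.sum_equiv (Fin.snocEquiv (fun _ : Fin (k + 2) => V)) _ _ (fun p => ?_)
          simp only [Fin.snocEquiv_apply]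
          rw [Fin.prod_univ_castSucc]
          simp only [Fin.snoc_last, Fin.snoc_castSucc, Fin.succ_castSucc, Fin.succ_last]
          rw [mul_assoc]

lemma coeff_prod_psN {V : Type*} [Fintype V] [DecidableEq V] (G : SimpleGraph V)
    (k n : ℕ) (y : Fin (k + 1) → V) :
    PowerSeries.coeff n (∏ i : Fin k, psN G (y i.castSucc) (y i.succ)) =
    if (∀ i : Fin k, y i.castSucc ≠ y i.succ) ∧
        (∑ i : Fin k, G.edist (y i.castSucc) (y i.succ)) = (n : ℕ∞) then 1 else 0 := by
  by_cases hd : ∀ i : Fin k, y i.castSucc ≠ y i.succ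
  · by_cases hf : ∀ i : Fin k, G.edist (y i.castSucc) (y i.succ) ≠ ⊤
    · have hprod : (∏ i : Fin k, psN G (y i.castSucc) (y i.succ)) =
          PowerSeries.X ^ (∑ i : Fin k, (G.edist (y i.castSucc) (y i.succ)).toNat) := by
        rw [← Finset.prod_pow_eq_pow_sum]
        refine Finset.prod_congr rfl fun i _ => ?_
        rw [psN_apply, if_neg (hd i)]
        simp only [psM, Matrix.of_apply, if_neg (hf i)]
      rw [hprod, PowerSeries.coeff_X_pow]
      have hsum : (∑ i : Fin k, G.edist (y i.castSucc) (y i.succ)) =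
          ((∑ i : Fin k, (G.edist (y i.castSucc) (y i.succ)).toNat : ℕ) : ℕ∞) := by
        rw [Nat.cast_sum]
        exact Finset.sum_congr rfl fun i _ => (ENat.coe_toNat (hf i)).symm
      have hiff : (n = ∑ i : Fin k, (G.edist (y i.castSucc) (y i.succ)).toNat) ↔
          ((∀ i : Fin k, y i.castSucc ≠ y i.succ) ∧
            (∑ i : Fin k, G.edist (y i.castSucc) (y i.succ)) = (n : ℕ∞)) := by
        rw [hsum]
        constructor
        · rintro rfl; exact ⟨hd, rfl⟩
        · rintro ⟨-, h⟩; exact_mod_cast h.symm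
      rw [if_congr hiff rfl rfl]
    · push_neg at hf
      obtain ⟨i, hi⟩ := hf
      have hzero : psN G (y i.castSucc) (y i.succ) = 0 := by
        rw [psN_apply, if_neg (hd i)]
        simp only [psM, Matrix.of_apply, if_pos hi]
      rw [Finset.prod_eq_zero (Finset.mem_univ i) hzero, map_zero]
      have : (∑ j : Fin k, G.edist (y j.castSucc) (y j.succ)) = ⊤ :=
        WithTop.sum_eq_top.mpr ⟨i, Finset.mem_univ i, hi⟩
      rw [if_neg]
      rintro ⟨-, h⟩
      rw [this] at h
      exact (by simp : (⊤ : ℕ∞) ≠ (n : ℕ∞)) h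
  · push_neg at hd
    obtain ⟨i, hi⟩ := hd
    have hzero : psN G (y i.castSucc) (y i.succ) = 0 := by rw [psN_apply, if_pos hi]
    rw [Finset.prod_eq_zero (Finset.mem_univ i) hzero, map_zero, if_neg]
    rintro ⟨h, -⟩
    exact h i hi

lemma coeff_entry_sum {V : Type*} [Fintype V] [DecidableEq V] (G : SimpleGraph V) (k n : ℕ) :
    PowerSeries.coeff n (∑ a, ∑ b, (psN G ^ k) a b) =
    ((Finset.univ.filter fun x : Fin (k + 1) → V =>
      (∀ i : Fin k, x i.castSucc ≠ x i.succ) ∧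
      (∑ i : Fin k, G.edist (x i.castSucc) (x i.succ)) = (n : ℕ∞)).card : ℚ) := by
  have h := psN_pow_tuple_sum G k (fun _ => 1)
  simp only [mul_one] at h
  rw [h, map_sum, Finset.sum_congr rfl fun y _ => coeff_prod_psN G k n y, Finset.sum_boole]

lemma psM_det_isUnit {V : Type*} [Fintype V] [DecidableEq V] (G : SimpleGraph V) :
    IsUnit (psM G).det := by
  rw [PowerSeries.isUnit_iff_constantCoeff, RingHom.map_det]
  have : (PowerSeries.constantCoeff (R := ℚ)).mapMatrix (psM G) = 1 := by
    ext x y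
    simp only [RingHom.mapMatrix_apply, Matrix.map_apply, psM_constantCoeff, Matrix.one_apply]
  rw [this, Matrix.det_one]
  exact isUnit_one

lemma coe_magMatrix_entry {V : Type*} [Fintype V] (G : SimpleGraph V) (x y : V) :
    (@Algebra.ofId (RatFunc ℚ) (LaurentSeries ℚ) _ _ (RatFunc.liftAlgebra ℚ (LaurentSeries ℚ))) (magMatrix G x y) = HahnSeries.ofPowerSeries ℤ ℚ (psM G x y) := by
  simp only [magMatrix, Matrix.of_apply, qExp, psM]
  by_cases h : G.edist x y = ⊤
  · rw [if_pos h, if_pos h, map_zero, map_zero]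
  · rw [if_neg h, if_neg h, map_pow, map_pow]
    congr 1
    rw [Algebra.ofId_apply, RatFunc.coe_X, HahnSeries.ofPowerSeries_X]

lemma coeff_neg_pow_entry_sum {V : Type*} [Fintype V] [DecidableEq V] (G : SimpleGraph V)
    (k n : ℕ) :
    PowerSeries.coeff n (∑ a, ∑ b, ((-psN G) ^ k) a b) =
    (-1 : ℚ) ^ k *
    ((Finset.univ.filter fun x : Fin (k + 1) → V =>
      (∀ i : Fin k, x i.castSucc ≠ x i.succ) ∧
      (∑ i : Fin k, G.edist (x i.castSucc) (x i.succ)) = (n : ℕ∞)).card : ℚ) := by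
  rcases Nat.even_or_odd k with hk | hk
  · rw [hk.neg_pow, coeff_entry_sum, hk.neg_one_pow, one_mul]
  · rw [hk.neg_pow]
    simp only [Matrix.neg_apply, Finset.sum_neg_distrib, map_neg]
    rw [coeff_entry_sum, hk.neg_one_pow, neg_one_mul]

lemma coeff_neg_pow_entry_zero {V : Type*} [Fintype V] [DecidableEq V] (G : SimpleGraph V)
    (k : ℕ) (x y : V) (j : ℕ) (hj : j < k) :
    PowerSeries.coeff j (((-psN G) ^ k) x y) = 0 := by
  rcases Nat.even_or_odd k with hk | hk
  · rw [hk.neg_pow]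
    exact psN_pow_coeff_eq_zero G k x y j hj
  · rw [hk.neg_pow, Matrix.neg_apply, map_neg, psN_pow_coeff_eq_zero G k x y j hj, neg_zero]

open scoped Classical in
/-- The magnitude of a graph, expanded as a power series, has `n`-th coefficient
`∑_{k=0}^n (-1)^k · #{(x₀,…,x_k) : x₀ ≠ x₁ ≠ ⋯ ≠ x_k, d(x₀,x₁) + ⋯ + d(x_{k-1},x_k) = n}`. -/
theorem magnitude_powerSeries_coeff
    {V : Type*} [Fintype V] [DecidableEq V] (G : SimpleGraph V) :
    ((magnitude G : LaurentSeries ℚ)) =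
      HahnSeries.ofPowerSeries ℤ ℚ (PowerSeries.mk fun n : ℕ =>
        ((∑ k ∈ Finset.range (n + 1), (-1 : ℤ) ^ k *
          ((Finset.univ.filter fun x : Fin (k + 1) → V =>
            (∀ i : Fin k, x i.castSucc ≠ x i.succ) ∧
            (∑ i : Fin k, G.edist (x i.castSucc) (x i.succ)) = (n : ℕ∞)).card : ℤ) : ℤ) : ℚ)) := by
  classical
  set ι : PowerSeries ℚ →+* LaurentSeries ℚ := HahnSeries.ofPowerSeries ℤ ℚ with hι
  set φ : RatFunc ℚ →+* LaurentSeries ℚ := @algebraMap (RatFunc ℚ) (LaurentSeries ℚ) _ _ (RatFunc.liftAlgebra ℚ (LaurentSeries ℚ)) with hφ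
  set B : Matrix V V (PowerSeries ℚ) := (psM G)⁻¹ with hB
  have hdet : IsUnit (psM G).det := psM_det_isUnit G
  have hMB : psM G * B = 1 := Matrix.mul_nonsing_inv _ hdet
  have hBM : B * psM G = 1 := Matrix.nonsing_inv_mul _ hdet
  have hmap : φ.mapMatrix (magMatrix G) = ι.mapMatrix (psM G) :=
    Matrix.ext fun x y => coe_magMatrix_entry G x y
  have hdetZ : IsUnit (magMatrix G).det := by
    rw [isUnit_iff_ne_zero]
    intro h0
    have h1 : φ (magMatrix G).det = 0 := by rw [h0, map_zero]
    rw [RingHom.map_det, hmap, ← RingHom.map_det] at h1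
    have h2 : (psM G).det ≠ 0 := hdet.ne_zero
    exact h2 (HahnSeries.ofPowerSeries_injective (by rw [h1, map_zero]))
  have hZ : magMatrix G * (magMatrix G)⁻¹ = 1 := Matrix.mul_nonsing_inv _ hdetZ
  have key : ι.mapMatrix B = φ.mapMatrix (magMatrix G)⁻¹ := by
    apply left_inv_eq_right_inv (a := ι.mapMatrix (psM G))
    · rw [← map_mul, hBM, map_one]
    · rw [← hmap, ← map_mul, hZ, map_one]
  have hL : ((magnitude G : RatFunc ℚ) : LaurentSeries ℚ) = ι (∑ x, ∑ y, B x y) := by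
    rw [magnitude]
    show φ (∑ x, ∑ y, (magMatrix G)⁻¹ x y) = _
    rw [map_sum, map_sum]
    refine (Finset.sum_congr rfl fun x _ => ?_).trans rfl
    rw [map_sum, map_sum]
    refine Finset.sum_congr rfl fun y _ => ?_
    exact (congrFun (congrFun key x) y).symm
  rw [hL]
  congr 1
  ext n
  rw [PowerSeries.coeff_mk]
  -- geometric series truncation
  set N := psN G with hN
  set m := n + 1 with hm
  set S : Matrix V V (PowerSeries ℚ) := ∑ i ∈ Finset.range m, (-N) ^ i with hS
  have hgeo : S * psM G = 1 - (-N) ^ m := by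
    have h1 := geom_sum_mul (-N) m
    have h2 : -N - 1 = -(psM G) := by rw [hN, psN]; abel
    rw [h2, mul_neg] at h1
    have := congrArg Neg.neg h1
    rw [neg_neg, neg_sub] at this
    rw [this]
  have hBeq : B = S + (-N) ^ m * B := by
    have h3 : S * psM G * B = (1 - (-N) ^ m) * B := by rw [hgeo]
    rw [mul_assoc, hMB, mul_one, sub_mul, one_mul] at h3
    rw [h3]; abel
  have hzero : PowerSeries.coeff n (∑ x, ∑ y, ((-N) ^ m * B) x y) = 0 := by
    rw [map_sum]
    refine Finset.sum_eq_zero fun x _ => ?_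
    rw [map_sum]
    refine Finset.sum_eq_zero fun y _ => ?_
    rw [Matrix.mul_apply, map_sum]
    refine Finset.sum_eq_zero fun z _ => ?_
    rw [PowerSeries.coeff_mul]
    refine Finset.sum_eq_zero fun p hp => ?_
    have hp1 : p.1 < m := by
      have := Finset.HasAntidiagonal.mem_antidiagonal.mp hp
      omega
    rw [coeff_neg_pow_entry_zero G m x z p.1 hp1, zero_mul]
  have hsplit : PowerSeries.coeff n (∑ x, ∑ y, B x y)
      = PowerSeries.coeff n (∑ x, ∑ y, S x y) := by
    conv_lhs => rw [hBeq]
    simp only [Matrix.add_apply, Finset.sum_add_distrib, map_add]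
    rw [hzero, add_zero]
  rw [hsplit]
  have hSsum : (∑ x, ∑ y, S x y) = ∑ i ∈ Finset.range m, ∑ x, ∑ y, ((-N) ^ i) x y := by
    rw [hS]
    simp only [Matrix.sum_apply]
    exact (Finset.sum_congr rfl fun x _ => Finset.sum_comm).trans Finset.sum_comm
  rw [hSsum, map_sum]
  push_cast
  exact Finset.sum_congr rfl fun k _ => coeff_neg_pow_entry_sum G k n
end

section
/- Let R be a commutative ring containing no nonzero nilpotent elements. Let Φ be an R-valued graph invariant (a function assigning Φ(G) ∈ R to each graph G with Φ(G) = Φ(H) whenever G ≅ H) that is multiplicative, i.e. Φ(K_1) = 1 and Φ(G □ H) = Φ(G)·Φ(H) for all graphs G, H, and satisfies inclusion-exclusion, i.e. Φ(∅) = 0 and Φ(X) = Φ(G) + Φ(H) − Φ(G ∩ H) whenever X is a graph with subgraphs G and H such that G ∪ H = X. Then Φ(G) = v(G)·1_R for every graph G, where v(G) is the number of vertices of G. -/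
open scoped Classical

private def isoOfNoAdj {V W : Type} {G : SimpleGraph V} {H : SimpleGraph W}
    (e : V ≃ W) (hG : ∀ a b, ¬ G.Adj a b) (hH : ∀ a b, ¬ H.Adj a b) : G ≃g H :=
  ⟨e, fun {_ _} => iff_of_false (hH _ _) (hG _ _)⟩

@[simps apply]
private noncomputable def pairEquiv {V : Type} {a b : V} (hab : a ≠ b) :
    ({a, b} : Set V) ≃ Fin 2 where
  toFun x := if (x : V) = a then 0 else 1
  invFun i := if i = 0 then ⟨a, by simp⟩ else ⟨b, by simp⟩
  left_inv := by
    rintro ⟨x, hx⟩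
    rcases hx with h | h
    · subst h; simp
    · simp only [Set.mem_singleton_iff] at h
      subst h
      simp [hab.symm, Fin.one_eq_zero_iff]
  right_inv := by
    intro i
    fin_cases i <;> simp [hab.symm]

private theorem key_lemma {R : Type} [CommRing R]
    (Φ : ∀ (V : Type) [Fintype V], SimpleGraph V → R)
    (hiso : ∀ (V W : Type) [Fintype V] [Fintype W] (G : SimpleGraph V) (H : SimpleGraph W),
      Nonempty (G ≃g H) → Φ V G = Φ W H)
    (hone : Φ (Fin 1) ⊤ = 1)
    (hempty : Φ (Fin 0) ⊥ = 0)
    (hie : ∀ (V : Type) [Fintype V] (X : SimpleGraph V) (G H : X.Subgraph),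
      G ⊔ H = ⊤ →
        Φ V X = Φ G.verts G.coe + Φ H.verts H.coe - Φ (G ⊓ H).verts (G ⊓ H).coe) :
    ∀ (n : ℕ) (V : Type) [Fintype V] (G : SimpleGraph V),
      Nat.card V + G.edgeSet.ncard ≤ n →
      Φ V G = (Nat.card V : R) + (G.edgeSet.ncard : R) * (Φ (Fin 2) ⊤ - 2) := by
  intro n
  induction n with
  | zero =>
    intro V _ G hle
    have hV : Nat.card V = 0 := by omega
    have hE : G.edgeSet.ncard = 0 := by omega
    rw [Nat.card_eq_fintype_card] at hV
    have : IsEmpty V := Fintype.card_eq_zero_iff.mp hV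
    have h0 : Φ V G = Φ (Fin 0) ⊥ := by
      refine hiso _ _ _ _ ⟨isoOfNoAdj (Equiv.equivOfIsEmpty V (Fin 0)) ?_ ?_⟩
      · intro a; exact isEmptyElim a
      · intro a; exact isEmptyElim a
    rw [h0, hempty, Nat.card_eq_fintype_card, hV, hE]
    simp
  | succ n ih =>
    intro V _ G hle
    by_cases hm : G.edgeSet.ncard = 0
    · -- edgeless case
      have hGbot : G = ⊥ := by
        have := (Set.ncard_eq_zero (G.edgeSet.toFinite)).mp hm
        exact SimpleGraph.edgeSet_eq_empty.mp this
      have hGadj : ∀ a b, ¬ G.Adj a b := by subst hGbot; simp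
      by_cases hV : IsEmpty V
      · have h0 : Φ V G = Φ (Fin 0) ⊥ := by
          refine hiso _ _ _ _ ⟨isoOfNoAdj (Equiv.equivOfIsEmpty V (Fin 0)) hGadj ?_⟩
          intro a; exact isEmptyElim a
        rw [h0, hempty, hm]
        have h1 : Nat.card V = 0 := by
          rw [Nat.card_eq_fintype_card]; exact Fintype.card_eq_zero
        rw [h1]; simp
      · have : Nonempty V := not_isEmpty_iff.mp hV
        obtain ⟨a⟩ := this
        set G1 : G.Subgraph := G.singletonSubgraph a with hG1
        set G2 : G.Subgraph :=
          { verts := {a}ᶜ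
            Adj := ⊥
            adj_sub := False.elim
            edge_vert := False.elim
            symm := ⟨fun _ _ h => False.elim h⟩ } with hG2
        have hsup : G1 ⊔ G2 = ⊤ := by
          ext x y
          · simp [hG1, hG2, em]
          · simp only [SimpleGraph.Subgraph.sup_adj, SimpleGraph.Subgraph.top_adj]
            constructor
            · rintro (h | h)
              · simp [hG1] at h
              · simp [hG2] at h
            · intro h; exact absurd h (hGadj x y)
        haveI hne' : Nonempty V := ⟨a⟩
        -- Φ G1.coe = 1
        have h1 : ∀ (i : Fintype ↥G1.verts), @Φ _ i G1.coe = 1 := by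
          intro i
          rw [← hone]
          haveI : Unique ↥G1.verts := Set.uniqueSingleton a
          refine hiso _ _ _ _ ⟨isoOfNoAdj (Equiv.ofUnique _ _) ?_ ?_⟩
          · intro x y h
            exact h
          · intro x y h
            exact h.ne (Subsingleton.elim x y)
        -- Φ G2.coe = card - 1
        have hcard2 : Nat.card ↥G2.verts = Nat.card V - 1 := by
          rw [Nat.card_coe_set_eq]
          show ({a}ᶜ : Set V).ncard = Nat.card V - 1
          rw [Set.compl_eq_univ_diff, Set.ncard_diff_singleton_of_mem (Set.mem_univ a),
            Set.ncard_univ]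
        have hE2 : G2.coe.edgeSet.ncard = 0 := by
          have : G2.coe = ⊥ := by
            ext x y
            simp only [SimpleGraph.Subgraph.coe_adj, SimpleGraph.bot_adj, iff_false]
            intro h
            exact h
          rw [this]
          simp
        have h2 : ∀ (i : Fintype ↥G2.verts), @Φ _ i G2.coe = ((Nat.card V - 1 : ℕ) : R) := by
          intro i
          have hle2 : Nat.card ↥G2.verts + G2.coe.edgeSet.ncard ≤ n := by
            rw [hE2, hcard2]
            have : 1 ≤ Nat.card V := by
              rw [Nat.card_eq_fintype_card]; exact Fintype.card_pos
            omega
          have := @ih _ i G2.coe hle2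
          rw [this, hE2, hcard2]
          push_cast
          ring
        -- Φ (G1 ⊓ G2).coe = 0
        have hinter : IsEmpty ((G1 ⊓ G2).verts : Set V) := by
          constructor
          rintro ⟨x, hx1, hx2⟩
          simp only [hG1, SimpleGraph.singletonSubgraph_verts, Set.mem_singleton_iff] at hx1
          exact hx2 hx1
        have h3 : ∀ (i : Fintype ↥(G1 ⊓ G2).verts), @Φ _ i (G1 ⊓ G2).coe = 0 := by
          intro i
          rw [← hempty]
          refine hiso _ _ _ _ ⟨isoOfNoAdj (Equiv.equivOfIsEmpty _ _) ?_ ?_⟩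
          · intro x; exact isEmptyElim x
          · intro x; exact isEmptyElim x
        rw [hie V G G1 G2 hsup, h1 _, h2 _, h3 _, hm]
        have hpos : 1 ≤ Nat.card V := by
          rw [Nat.card_eq_fintype_card]; exact Fintype.card_pos
        push_cast [Nat.cast_sub hpos]
        ring
    · -- G has an edge
      obtain ⟨e, he⟩ := Set.nonempty_of_ncard_ne_zero hm
      induction e using Sym2.ind with
      | _ a b =>
      have hadj : G.Adj a b := (SimpleGraph.mem_edgeSet G).mp he
      have hab : a ≠ b := hadj.ne
      set H1 : G.Subgraph := (⊤ : G.Subgraph).deleteEdges {s(a, b)} with hH1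
      set H2 : G.Subgraph := G.subgraphOfAdj hadj with hH2
      have hsup : H1 ⊔ H2 = ⊤ := by
        ext x y
        · simp [hH1, hH2]
        · simp only [SimpleGraph.Subgraph.sup_adj, SimpleGraph.Subgraph.top_adj, hH1, hH2,
            SimpleGraph.Subgraph.deleteEdges_adj, SimpleGraph.subgraphOfAdj_adj,
            Set.mem_singleton_iff]
          constructor
          · rintro (⟨h, -⟩ | h)
            · exact h
            · rw [Sym2.eq_iff] at h
              rcases h with ⟨rfl, rfl⟩ | ⟨rfl, rfl⟩
              · exact hadj
              · exact hadj.symm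
          · intro h
            by_cases hxy : s(x, y) = s(a, b)
            · right; exact hxy.symm
            · left; exact ⟨h, hxy⟩
      -- Φ H1.coe = Φ V (G.deleteEdges {s(a,b)})
      have h1 : ∀ (i : Fintype ↥H1.verts), @Φ _ i H1.coe = Φ V (G.deleteEdges {s(a, b)}) := by
        intro i
        refine hiso _ _ _ _ ⟨⟨Equiv.Set.univ V, ?_⟩⟩
        intro x y
        simp [hH1, SimpleGraph.deleteEdges_adj, SimpleGraph.Subgraph.coe_adj,
          SimpleGraph.Subgraph.deleteEdges_adj, Equiv.Set.univ_apply]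
        exact Iff.rfl
      have hEdel : (G.deleteEdges {s(a, b)}).edgeSet.ncard = G.edgeSet.ncard - 1 := by
        rw [SimpleGraph.edgeSet_deleteEdges,
          Set.ncard_diff_singleton_of_mem he]
      have hdel : Φ V (G.deleteEdges {s(a, b)}) =
          (Nat.card V : R) + ((G.edgeSet.ncard - 1 : ℕ) : R) * (Φ (Fin 2) ⊤ - 2) := by
        rw [ih V (G.deleteEdges {s(a, b)}) (by rw [hEdel]; omega), hEdel]
      -- Φ H2.coe = Φ (Fin 2) ⊤
      have h2 : ∀ (i : Fintype ↥H2.verts), @Φ _ i H2.coe = Φ (Fin 2) ⊤ := by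
        intro i
        refine hiso _ _ _ _ ⟨⟨pairEquiv hab, ?_⟩⟩
        rintro ⟨x, hx⟩ ⟨y, hy⟩
        have hx' : x = a ∨ x = b := by simpa [hH2] using hx
        have hy' : y = a ∨ y = b := by simpa [hH2] using hy
        simp only [SimpleGraph.top_adj, SimpleGraph.Subgraph.coe_adj, hH2,
          SimpleGraph.subgraphOfAdj_adj, ne_eq]
        rcases hx' with h | h <;> rcases hy' with h' | h' <;>
          simp [pairEquiv_apply, h, h', hab, hab.symm, Sym2.eq_iff, Fin.zero_eq_one_iff,
            Fin.one_eq_zero_iff, Equiv.coe_fn_mk]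
        all_goals (intro hc; have := congrArg Subtype.val ((pairEquiv hab).injective hc); grind)
      -- Φ (H1 ⊓ H2).coe = 2
      have hvinter : (H1 ⊓ H2).verts = ({a, b} : Set V) := by
        simp [hH1, hH2]
      have hnoadj : ∀ x y, ¬ (H1 ⊓ H2).coe.Adj x y := by
        rintro ⟨x, hx⟩ ⟨y, hy⟩ h
        simp only [SimpleGraph.Subgraph.coe_adj, SimpleGraph.Subgraph.inf_adj, hH1, hH2,
          SimpleGraph.Subgraph.deleteEdges_adj, SimpleGraph.subgraphOfAdj_adj,
          Set.mem_singleton_iff] at h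
        exact h.1.2 h.2.symm
      have hcardinter : Nat.card ↥(H1 ⊓ H2).verts = 2 := by
        rw [Nat.card_coe_set_eq, hvinter, Set.ncard_pair hab]
      have hEinter : (H1 ⊓ H2).coe.edgeSet.ncard = 0 := by
        have : (H1 ⊓ H2).coe = ⊥ := by
          ext x y
          simp only [SimpleGraph.bot_adj, iff_false]
          exact hnoadj x y
        rw [this]; simp
      have h3 : ∀ (i : Fintype ↥(H1 ⊓ H2).verts), @Φ _ i (H1 ⊓ H2).coe = 2 := by
        intro i
        have hle3 : Nat.card ↥(H1 ⊓ H2).verts + (H1 ⊓ H2).coe.edgeSet.ncard ≤ n := by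
          rw [hcardinter, hEinter]
          have h2V : 2 ≤ Nat.card V := by
            rw [Nat.card_eq_fintype_card, ← Finset.card_pair hab]
            exact Finset.card_le_univ _
          omega
        have := @ih _ i (H1 ⊓ H2).coe hle3
        rw [this, hcardinter, hEinter]
        push_cast
        ring
      rw [hie V G H1 H2 hsup, h1 _, hdel, h2 _, h3 _]
      have hmpos : 1 ≤ G.edgeSet.ncard := Nat.one_le_iff_ne_zero.mpr hm
      push_cast [Nat.cast_sub hmpos]
      ring

open scoped Classical in
/-- In a ring with no nonzero nilpotents, the only multiplicative graph invariant
satisfying inclusion-exclusion is the number of vertices. -/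
theorem graph_invariant_multiplicative_inclusionExclusion_eq_card
    {R : Type} [CommRing R] [IsReduced R]
    (Φ : ∀ (V : Type) [Fintype V], SimpleGraph V → R)
    (hiso : ∀ (V W : Type) [Fintype V] [Fintype W] (G : SimpleGraph V) (H : SimpleGraph W),
      Nonempty (G ≃g H) → Φ V G = Φ W H)
    (hone : Φ (Fin 1) ⊤ = 1)
    (hmul : ∀ (V W : Type) [Fintype V] [Fintype W] (G : SimpleGraph V) (H : SimpleGraph W),
      Φ (V × W) (G.boxProd H) = Φ V G * Φ W H)
    (hempty : Φ (Fin 0) ⊥ = 0)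
    (hie : ∀ (V : Type) [Fintype V] (X : SimpleGraph V) (G H : X.Subgraph),
      G ⊔ H = ⊤ →
        Φ V X = Φ G.verts G.coe + Φ H.verts H.coe - Φ (G ⊓ H).verts (G ⊓ H).coe)
    (V : Type) [Fintype V] (G : SimpleGraph V) :
    Φ V G = (Fintype.card V : R) := by
  set c : R := Φ (Fin 2) ⊤ - 2 with hc
  -- compute the edge count of K₂ □ K₂
  set K : SimpleGraph (Fin 2 × Fin 2) := (⊤ : SimpleGraph (Fin 2)).boxProd ⊤ with hK
  have hedge : K.edgeSet =
      (↑({s(((0 : Fin 2), (0 : Fin 2)), ((0 : Fin 2), (1 : Fin 2))),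
          s(((0 : Fin 2), (0 : Fin 2)), ((1 : Fin 2), (0 : Fin 2))),
          s(((1 : Fin 2), (1 : Fin 2)), ((0 : Fin 2), (1 : Fin 2))),
          s(((1 : Fin 2), (1 : Fin 2)), ((1 : Fin 2), (0 : Fin 2)))} :
        Finset (Sym2 (Fin 2 × Fin 2))) : Set (Sym2 (Fin 2 × Fin 2))) := by
    ext e
    induction e using Sym2.ind with
    | _ x y =>
      simp only [SimpleGraph.mem_edgeSet, hK, SimpleGraph.boxProd_adj, SimpleGraph.top_adj,
        Finset.coe_insert, Set.mem_insert_iff, Finset.coe_singleton, Set.mem_singleton_iff]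
      revert x y
      decide
  have hncard : K.edgeSet.ncard = 4 := by
    rw [hedge, Set.ncard_coe_finset]
    decide
  have hcard4 : Nat.card (Fin 2 × Fin 2) = 4 := by
    simp [Nat.card_eq_fintype_card]
  have hK4 : Φ (Fin 2 × Fin 2) K = (4 : R) + (4 : R) * c := by
    have := key_lemma Φ hiso hone hempty hie (Nat.card (Fin 2 × Fin 2) + K.edgeSet.ncard)
      (Fin 2 × Fin 2) K le_rfl
    rw [this, hncard, hcard4]
    push_cast
    ring
  have hsq : c ^ 2 = 0 := by
    have hKmul : Φ (Fin 2 × Fin 2) K = Φ (Fin 2) ⊤ * Φ (Fin 2) ⊤ := hmul _ _ _ _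
    have h2 : Φ (Fin 2) ⊤ = c + 2 := by rw [hc]; ring
    rw [hK4, h2] at hKmul
    linear_combination -hKmul
  have hc0 : c = 0 := IsNilpotent.eq_zero ⟨2, hsq⟩
  have := key_lemma Φ hiso hone hempty hie (Nat.card V + G.edgeSet.ncard) V G le_rfl
  rw [this, ← hc, hc0, Nat.card_eq_fintype_card]
  ring
end

section
/- Let X be a graph with subgraphs G and H such that G ∪ H = X. If G ∩ H is convex in X, then G and H are also convex in X. -/
open SimpleGraph

/-- A subgraph `U` of `X` is convex in `X` if the shortest-path distance in `U` agrees with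
the shortest-path distance in `X` between vertices of `U`. -/
def ConvexIn {V : Type*} {X : SimpleGraph V} (U : X.Subgraph) : Prop :=
  ∀ (u u' : V) (hu : u ∈ U.verts) (hu' : u' ∈ U.verts),
    U.coe.edist ⟨u, hu⟩ ⟨u', hu'⟩ = X.edist u u'

/-- A walk has a prefix of any length `j ≤ p.length`, ending at `p.getVert j`. -/
lemma exists_prefix_walk {V : Type*} {G : SimpleGraph V} :
    ∀ {u v : V} (p : G.Walk u v) (j : ℕ), j ≤ p.length →
      ∃ q : G.Walk u (p.getVert j), q.length = j := by
  intro u v p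
  induction p with
  | nil =>
    intro j hj
    simp only [Walk.length_nil, Nat.le_zero] at hj
    subst hj
    exact ⟨Walk.nil, rfl⟩
  | cons h q ih =>
    intro j hj
    cases j with
    | zero => exact ⟨Walk.nil, rfl⟩
    | succ j =>
      obtain ⟨r, hr⟩ := ih j (by simpa using Nat.succ_le_succ_iff.mp (by simpa using hj))
      exact ⟨r.cons h, by simp [hr]⟩

/-- A walk has a suffix starting at `p.getVert j` of length `p.length - j`. -/
lemma exists_suffix_walk {V : Type*} {G : SimpleGraph V} :
    ∀ {u v : V} (p : G.Walk u v) (j : ℕ),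
      ∃ q : G.Walk (p.getVert j) v, q.length = p.length - j := by
  intro u v p
  induction p with
  | nil => intro j; exact ⟨Walk.nil, by simp⟩
  | cons h q ih =>
    intro j
    cases j with
    | zero => exact ⟨Walk.cons h q, (Nat.sub_zero _).symm⟩
    | succ j =>
      obtain ⟨r, hr⟩ := ih j
      exact ⟨r, by simpa using hr⟩

lemma convexIn_left {V : Type*} {X : SimpleGraph V} {G H : X.Subgraph}
    (hGH : G ⊔ H = ⊤) (hconv : ConvexIn (G ⊓ H)) : ConvexIn G := by
  classical
  have hadjX : ∀ a b, X.Adj a b → G.Adj a b ∨ H.Adj a b := by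
    intro a b hab
    have h2 : (G ⊔ H).Adj a b := by rw [hGH]; exact (Subgraph.top_adj).mpr hab
    exact (Subgraph.sup_adj).mp h2
  have key : ∀ n : ℕ, ∀ u u' (hu : u ∈ G.verts) (hu' : u' ∈ G.verts),
      X.edist u u' = n → G.coe.edist ⟨u, hu⟩ ⟨u', hu'⟩ ≤ (n : ℕ∞) := by
    intro n
    induction n using Nat.strong_induction_on with
    | _ n ih =>
      intro u u' hu hu' hd
      rcases Nat.eq_zero_or_pos n with hn0 | hn
      · subst hn0
        have huu : u = u' := by
          rw [← X.edist_eq_zero_iff (u := u) (v := u')]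
          simpa using hd
        subst huu
        simp [edist_self]
      · obtain ⟨p, hp⟩ := exists_walk_of_edist_eq_coe hd
        -- distances along a shortest walk are exact
        have hexact : ∀ j ≤ n, X.edist u (p.getVert j) = (j : ℕ∞) ∧
            X.edist (p.getVert j) u' = ((n - j : ℕ) : ℕ∞) := by
          intro j hj
          obtain ⟨q1, hq1⟩ := exists_prefix_walk p j (by omega)
          obtain ⟨q2, hq2⟩ := exists_suffix_walk p j
          have h1 : X.edist u (p.getVert j) ≤ (j : ℕ∞) := by
            have := X.edist_le q1
            rwa [hq1] at this
          have h2 : X.edist (p.getVert j) u' ≤ ((n - j : ℕ) : ℕ∞) := by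
            have := X.edist_le q2
            rwa [hq2, hp] at this
          have hne1 : X.edist u (p.getVert j) ≠ ⊤ :=
            ne_top_of_le_ne_top (ENat.coe_ne_top j) h1
          have hne2 : X.edist (p.getVert j) u' ≠ ⊤ :=
            ne_top_of_le_ne_top (ENat.coe_ne_top (n - j)) h2
          have htri : (n : ℕ∞) ≤ X.edist u (p.getVert j) + X.edist (p.getVert j) u' :=
            hd ▸ X.edist_triangle
          lift X.edist u (p.getVert j) to ℕ using hne1 with a ha
          lift X.edist (p.getVert j) u' to ℕ using hne2 with b hb
          rw [← Nat.cast_add, Nat.cast_le] at htri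
          rw [Nat.cast_le] at h1 h2
          constructor <;> exact_mod_cast congrArg (Nat.cast : ℕ → ℕ∞) (by omega)
        have hadj1 : X.Adj u (p.getVert 1) := by
          have := p.adj_getVert_succ (i := 0) (by omega)
          simpa using this
        rcases hadjX _ _ hadj1 with hG | hH
        · -- first edge lies in G
          have hv : p.getVert 1 ∈ G.verts := hG.snd_mem
          have hdv : X.edist (p.getVert 1) u' = ((n - 1 : ℕ) : ℕ∞) := (hexact 1 hn).2
          have ihv := ih (n - 1) (by omega) (p.getVert 1) u' hv hu' hdv
          have hadjG : G.coe.Adj ⟨u, hu⟩ ⟨p.getVert 1, hv⟩ := hG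
          calc G.coe.edist ⟨u, hu⟩ ⟨u', hu'⟩
              ≤ G.coe.edist ⟨u, hu⟩ ⟨p.getVert 1, hv⟩ +
                G.coe.edist ⟨p.getVert 1, hv⟩ ⟨u', hu'⟩ := SimpleGraph.edist_triangle
            _ ≤ 1 + ((n - 1 : ℕ) : ℕ∞) :=
                add_le_add (by simpa using G.coe.edist_le hadjG.toWalk) ihv
            _ = (n : ℕ∞) := by
                rw [show (1 : ℕ∞) = ((1 : ℕ) : ℕ∞) from rfl, ← Nat.cast_add]
                exact congrArg _ (by omega)
        · -- first edge lies in H: take the maximal initial block of H-edges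
          have huH : u ∈ H.verts := hH.fst_mem
          set P : ℕ → Prop := fun k => ∀ i < k, H.Adj (p.getVert i) (p.getVert (i + 1))
            with hPdef
          have hP1 : P 1 := by
            intro i hi
            interval_cases i
            simpa using hH
          set j := Nat.findGreatest P n with hjdef
          have hj1 : 1 ≤ j := Nat.le_findGreatest hn hP1
          have hjn : j ≤ n := Nat.findGreatest_le n
          have hPj : P j := Nat.findGreatest_spec hn hP1
          set w := p.getVert j with hwdef
          have hwH : w ∈ H.verts := by
            have h' := hPj (j - 1) (by omega)
            have he : j - 1 + 1 = j := by omega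
            rw [he] at h'
            exact h'.snd_mem
          have hwG : w ∈ G.verts := by
            rcases eq_or_lt_of_le hjn with heq | hlt
            · have hwu' : w = u' := by
                rw [hwdef, heq, ← hp, Walk.getVert_length]
              rw [hwu']; exact hu'
            · have hnP : ¬ P (j + 1) := Nat.findGreatest_is_greatest (P := P) (n := n) (by omega) (by omega)
              have hHadj : ¬ H.Adj (p.getVert j) (p.getVert (j + 1)) := by
                intro hc
                apply hnP
                intro i hi
                rcases Nat.lt_succ_iff_lt_or_eq.mp hi with h' | h'
                · exact hPj i h'
                · subst h'; exact hc
              have hX : X.Adj (p.getVert j) (p.getVert (j + 1)) :=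
                p.adj_getVert_succ (by omega)
              rcases hadjX _ _ hX with h' | h'
              · exact h'.fst_mem
              · exact absurd h' hHadj
          have huw : X.edist u w = (j : ℕ∞) := (hexact j hjn).1
          have hwu' : X.edist w u' = ((n - j : ℕ) : ℕ∞) := (hexact j hjn).2
          have hconv' : (G ⊓ H).coe.edist ⟨u, ⟨hu, huH⟩⟩ ⟨w, ⟨hwG, hwH⟩⟩ = (j : ℕ∞) :=
            (hconv u w ⟨hu, huH⟩ ⟨hwG, hwH⟩).trans huw
          obtain ⟨q, hq⟩ := exists_walk_of_edist_eq_coe hconv'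
          have h1 : G.coe.edist ⟨u, hu⟩ ⟨w, hwG⟩ ≤ (j : ℕ∞) := by
            have hle := G.coe.edist_le (q.map (Subgraph.inclusion (inf_le_left (b := H))))
            rwa [Walk.length_map, hq] at hle
          have h2 : G.coe.edist ⟨w, hwG⟩ ⟨u', hu'⟩ ≤ ((n - j : ℕ) : ℕ∞) :=
            ih (n - j) (by omega) w u' hwG hu' hwu'
          calc G.coe.edist ⟨u, hu⟩ ⟨u', hu'⟩
              ≤ G.coe.edist ⟨u, hu⟩ ⟨w, hwG⟩ +
                G.coe.edist ⟨w, hwG⟩ ⟨u', hu'⟩ := SimpleGraph.edist_triangle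
            _ ≤ (j : ℕ∞) + ((n - j : ℕ) : ℕ∞) := add_le_add h1 h2
            _ = (n : ℕ∞) := by rw [← Nat.cast_add]; exact congrArg _ (by omega)
  intro u u' hu hu'
  refine le_antisymm ?_ ?_
  · rcases eq_or_ne (X.edist u u') ⊤ with htop | hne
    · rw [htop]; exact le_top
    · obtain ⟨n, hn⟩ := WithTop.ne_top_iff_exists.mp hne
      rw [← hn]
      exact key n u u' hu hu' hn.symm
  · rcases eq_or_ne (G.coe.edist ⟨u, hu⟩ ⟨u', hu'⟩) ⊤ with htop | hne
    · rw [htop]; exact le_top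
    · obtain ⟨q, hq⟩ := exists_walk_of_edist_ne_top hne
      rw [← hq]
      have hle := X.edist_le (q.map G.hom)
      rwa [Walk.length_map] at hle

/-- If `G ∪ H = X` and `G ∩ H` is convex in `X`, then `G` and `H` are convex in `X`. -/
theorem convexIn_of_inter_convexIn {V : Type*} (X : SimpleGraph V) (G H : X.Subgraph)
    (hGH : G ⊔ H = ⊤) (hconv : ConvexIn (G ⊓ H)) :
    ConvexIn G ∧ ConvexIn H := by
  refine ⟨convexIn_left hGH hconv, convexIn_left (G := H) (H := G) ?_ ?_⟩
  · rwa [sup_comm]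
  · rwa [inf_comm]
end

section
/- Let X be a tree, and let G and H be subtrees (connected subgraphs that are trees) of X such that G ∪ H = X. Then |X|(q) = |G|(q) + |H|(q) − |G ∩ H|(q) in ℚ(q). -/
set_option synthInstance.maxHeartbeats 1000000
set_option maxHeartbeats 1000000


/-! ### Auxiliary results -/

namespace MagnitudeAux

open SimpleGraph Finset

variable {V : Type*}

/-- In an acyclic graph, for reachable `x ≠ y` there is a unique neighbor `z₀` of `y`
which is closer to `x`, and all other neighbors of `y` are at distance `dist x y + 1`. -/
lemma neighbor_dist {F : SimpleGraph V} (hF : F.IsAcyclic)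
    {x y : V} (hxy : x ≠ y) (hr : F.Reachable x y) :
    ∃ z₀, F.Adj y z₀ ∧ F.dist x z₀ + 1 = F.dist x y ∧
      ∀ z, F.Adj y z → z ≠ z₀ → F.dist x z = F.dist x y + 1 := by
  classical
  obtain ⟨p, hp, hl⟩ := hr.exists_path_of_dist
  obtain ⟨z₀, hadj, q, hq⟩ := Walk.exists_eq_cons_of_ne hxy.symm p.reverse
  have hqpath : q.IsPath ∧ y ∉ q.support := by
    have h := hp.reverse
    rw [hq, Walk.cons_isPath_iff] at h
    exact h
  have hlen : q.length + 1 = F.dist x y := by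
    have h := p.length_reverse
    rw [hq] at h
    simpa [hl] using h
  have hrz₀ : F.Reachable x z₀ := ⟨q.reverse⟩
  have hz₀le : F.dist x z₀ ≤ q.length := by
    have h := SimpleGraph.dist_le q.reverse
    rwa [Walk.length_reverse] at h
  have hge : F.dist x y ≤ F.dist x z₀ + 1 := by
    obtain ⟨w, hw⟩ := hrz₀.exists_walk_length_eq_dist
    have h := SimpleGraph.dist_le (w.concat hadj.symm)
    rwa [Walk.length_concat, hw] at h
  have hz₀ : F.dist x z₀ + 1 = F.dist x y := by omega
  have key : ∀ z, F.Adj y z → F.dist x z ≤ F.dist x y → z = z₀ := by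
    intro z hz hle
    have hrzz : F.Reachable x z := hr.trans ⟨hz.toWalk⟩
    obtain ⟨w, hwp, hwl⟩ := hrzz.exists_path_of_dist
    have hy : y ∉ w.support := by
      intro hy
      have h1 := congrArg Walk.length (w.take_spec hy)
      rw [Walk.length_append] at h1
      have h2 : F.dist x y ≤ (w.takeUntil y hy).length := SimpleGraph.dist_le _
      have h3 : (w.dropUntil y hy).length ≠ 0 := by
        intro h0
        exact hz.ne (Walk.eq_of_length_eq_zero h0)
      omega
    have P1 : (Walk.cons hz w.reverse).IsPath := by
      rw [Walk.cons_isPath_iff]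
      exact ⟨hwp.reverse, by simpa [Walk.support_reverse] using hy⟩
    have P2 : (Walk.cons hadj q).IsPath := by rw [← hq]; exact hp.reverse
    have hpq := SimpleGraph.isAcyclic_iff_path_unique.mp hF
      (⟨_, P1⟩ : F.Path y x) (⟨_, P2⟩ : F.Path y x)
    have heq : Walk.cons hz w.reverse = Walk.cons hadj q := congrArg Subtype.val hpq
    have hsup := congrArg Walk.support heq
    rw [Walk.support_cons, Walk.support_cons, w.reverse.support_eq_cons,
      q.support_eq_cons] at hsup
    simp only [List.cons.injEq] at hsup
    exact hsup.2.1
  refine ⟨z₀, hadj, hz₀, fun z hz hne => ?_⟩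
  have h1 : F.dist x z ≤ F.dist x y + 1 := by
    have h := SimpleGraph.dist_le (p.concat hz)
    rwa [Walk.length_concat, hl] at h
  have h2 : ¬ F.dist x z ≤ F.dist x y := fun h => hne (key z hz h)
  omega

lemma qExp_of_reachable {F : SimpleGraph V} {x y : V} (h : F.Reachable x y) :
    qExp (F.edist x y) = RatFunc.X ^ F.dist x y := by
  rw [qExp, if_neg (edist_ne_top_iff_reachable.mpr h)]
  rfl

lemma qExp_of_not_reachable {F : SimpleGraph V} {x y : V} (h : ¬ F.Reachable x y) :
    qExp (F.edist x y) = 0 := by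
  rw [qExp, if_pos (edist_eq_top_of_not_reachable h)]

lemma magMatrix_self [Fintype V] (F : SimpleGraph V) (x : V) :
    magMatrix F x x = 1 := by
  simp [magMatrix, qExp]

lemma magMatrix_adj [Fintype V] {F : SimpleGraph V} {x y : V} (h : F.Adj x y) :
    magMatrix F x y = RatFunc.X := by
  have : F.edist x y = 1 := edist_eq_one_iff_adj.mpr h
  simp only [magMatrix, Matrix.of_apply, this, qExp]
  norm_num

open scoped Classical in
/-- The sum `∑_z [Adj y z]`, i.e. the degree of `y`, as a rational function. -/
noncomputable def degS [Fintype V] (F : SimpleGraph V) (y : V) : RatFunc ℚ :=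
  ∑ z, if F.Adj y z then (1 : RatFunc ℚ) else 0

open scoped Classical in
/-- The explicit inverse (up to the factor `1 - q²`) of the magnitude matrix of a forest. -/
noncomputable def mInv [Fintype V] (F : SimpleGraph V) : Matrix V V (RatFunc ℚ) :=
  Matrix.of fun z y =>
    if z = y then 1 - RatFunc.X ^ 2 + RatFunc.X ^ 2 * degS F y
    else if F.Adj y z then -RatFunc.X else 0

open scoped Classical in
lemma mul_mInv [Fintype V] [DecidableEq V] {F : SimpleGraph V} (hF : F.IsAcyclic) :
    magMatrix F * mInv F = (1 - RatFunc.X ^ 2 : RatFunc ℚ) • (1 : Matrix V V (RatFunc ℚ)) := by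
  ext x y
  rw [Matrix.mul_apply]
  have hsplit : ∑ z, magMatrix F x z * mInv F z y
      = magMatrix F x y * (1 - RatFunc.X ^ 2 + RatFunc.X ^ 2 * degS F y)
        + ∑ z, (if F.Adj y z then magMatrix F x z * (-RatFunc.X) else 0) := by
    rw [← Finset.add_sum_erase _ (fun z => magMatrix F x z * mInv F z y) (mem_univ y)]
    congr 1
    · simp [mInv]
    · rw [← Finset.add_sum_erase _
        (fun z => if F.Adj y z then magMatrix F x z * (-RatFunc.X) else 0) (mem_univ y),
        if_neg (F.irrefl), zero_add]
      refine Finset.sum_congr rfl fun z hz => ?_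
      rw [Finset.mem_erase] at hz
      simp [mInv, hz.1, mul_ite]
  rw [hsplit]
  by_cases hxy : x = y
  · subst hxy
    have hn : ∀ z, (if F.Adj x z then magMatrix F x z * (-RatFunc.X) else 0)
        = (if F.Adj x z then (1 : RatFunc ℚ) else 0) * (RatFunc.X * -RatFunc.X) := by
      intro z
      by_cases h : F.Adj x z
      · rw [if_pos h, if_pos h, magMatrix_adj h]; ring
      · simp [h]
    rw [Finset.sum_congr rfl fun z _ => hn z, ← Finset.sum_mul, magMatrix_self]
    rw [Matrix.smul_apply, Matrix.one_apply_eq, smul_eq_mul]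
    show 1 * (1 - RatFunc.X ^ 2 + RatFunc.X ^ 2 * degS F x)
      + degS F x * (RatFunc.X * -RatFunc.X) = (1 - RatFunc.X ^ 2) * 1
    ring
  · by_cases hr : F.Reachable x y
    · obtain ⟨z₀, hadj, hz₀, hother⟩ := neighbor_dist hF hxy hr
      have hZxy : magMatrix F x y = RatFunc.X ^ F.dist x y := qExp_of_reachable hr
      have hZz₀ : magMatrix F x z₀ = RatFunc.X ^ F.dist x z₀ :=
        qExp_of_reachable (hr.trans ⟨hadj.toWalk⟩)
      rw [← Finset.add_sum_erase _
        (fun z => if F.Adj y z then magMatrix F x z * (-RatFunc.X) else 0) (mem_univ z₀),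
        if_pos hadj, hZz₀]
      have herase : ∑ z ∈ Finset.univ.erase z₀,
          (if F.Adj y z then magMatrix F x z * (-RatFunc.X) else 0)
          = (∑ z ∈ Finset.univ.erase z₀, if F.Adj y z then (1 : RatFunc ℚ) else 0)
            * (RatFunc.X ^ (F.dist x y + 1) * -RatFunc.X) := by
        rw [Finset.sum_mul]
        refine Finset.sum_congr rfl fun z hz => ?_
        rw [Finset.mem_erase] at hz
        by_cases h : F.Adj y z
        · have hZz : magMatrix F x z = RatFunc.X ^ F.dist x z :=
            qExp_of_reachable (hr.trans ⟨h.toWalk⟩)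
          rw [if_pos h, if_pos h, hZz, hother z h hz.1]
          ring
        · simp [h]
      rw [herase]
      have hdegS : degS F y = 1 + ∑ z ∈ Finset.univ.erase z₀,
          (if F.Adj y z then (1 : RatFunc ℚ) else 0) := by
        rw [degS, ← Finset.add_sum_erase _
          (fun z => if F.Adj y z then (1 : RatFunc ℚ) else 0) (mem_univ z₀), if_pos hadj]
      rw [hdegS, hZxy, Matrix.smul_apply, Matrix.one_apply_ne hxy, smul_zero, ← hz₀]
      set E := ∑ z ∈ Finset.univ.erase z₀, (if F.Adj y z then (1 : RatFunc ℚ) else 0)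
      set e := F.dist x z₀
      ring
    · have hZxy : magMatrix F x y = 0 := qExp_of_not_reachable hr
      have hz : ∀ z, (if F.Adj y z then magMatrix F x z * (-RatFunc.X) else 0) = 0 := by
        intro z
        by_cases h : F.Adj y z
        · have hZz : magMatrix F x z = 0 :=
            qExp_of_not_reachable (fun hxz => hr (hxz.trans ⟨h.symm.toWalk⟩))
          rw [if_pos h, hZz, zero_mul]
        · rw [if_neg h]
      rw [Finset.sum_congr rfl fun z _ => hz z, Finset.sum_const, smul_zero, hZxy,
        Matrix.smul_apply, Matrix.one_apply_ne hxy, smul_zero, zero_mul, add_zero]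

lemma one_sub_X_sq_ne_zero : (1 - RatFunc.X ^ 2 : RatFunc ℚ) ≠ 0 := by
  have h : (1 - RatFunc.X ^ 2 : RatFunc ℚ)
      = algebraMap (Polynomial ℚ) (RatFunc ℚ) (1 - Polynomial.X ^ 2) := by
    simp [map_sub, map_pow, RatFunc.algebraMap_X]
  rw [h]
  apply RatFunc.algebraMap_ne_zero
  intro h0
  have := congrArg (Polynomial.eval 0) h0
  simp at this

lemma one_add_X_ne_zero : (1 + RatFunc.X : RatFunc ℚ) ≠ 0 := by
  have h : (1 + RatFunc.X : RatFunc ℚ)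
      = algebraMap (Polynomial ℚ) (RatFunc ℚ) (1 + Polynomial.X) := by
    simp [map_add, RatFunc.algebraMap_X]
  rw [h]
  apply RatFunc.algebraMap_ne_zero
  intro h0
  have := congrArg (Polynomial.eval 0) h0
  simp at this

open scoped Classical in
/-- The magnitude of a forest: `|F| = n - (q/(1+q)) · ∑_{x,y} [Adj x y]`. -/
lemma magnitude_acyclic [Fintype V] [DecidableEq V] {F : SimpleGraph V}
    (hF : F.IsAcyclic) :
    magnitude F = (Fintype.card V : RatFunc ℚ)
      - (RatFunc.X / (1 + RatFunc.X))
        * ∑ x : V, ∑ y : V, (if F.Adj x y then (1 : RatFunc ℚ) else 0) := by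
  have hinv : (magMatrix F)⁻¹ = (1 - RatFunc.X ^ 2 : RatFunc ℚ)⁻¹ • mInv F := by
    apply Matrix.inv_eq_right_inv
    rw [Matrix.mul_smul, mul_mInv hF, smul_smul,
      inv_mul_cancel₀ one_sub_X_sq_ne_zero, one_smul]
  have hrow : ∀ x : V, ∑ y, mInv F x y
      = (1 - RatFunc.X ^ 2 + RatFunc.X ^ 2 * degS F x)
        + ∑ y, (if F.Adj y x then (-RatFunc.X : RatFunc ℚ) else 0) := by
    intro x
    rw [← Finset.add_sum_erase _ (fun y => mInv F x y) (mem_univ x),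
      ← Finset.add_sum_erase _
        (fun y => if F.Adj y x then (-RatFunc.X : RatFunc ℚ) else 0) (mem_univ x),
      if_neg (F.irrefl), zero_add]
    refine congrArg₂ (· + ·) (by simp [mInv]) (Finset.sum_congr rfl fun y hy => ?_)
    rw [Finset.mem_erase] at hy
    simp [mInv, Ne.symm hy.1]
  have hS : ∑ x : V, degS F x
      = ∑ x : V, ∑ y : V, (if F.Adj x y then (1 : RatFunc ℚ) else 0) := rfl
  have hS' : ∑ x : V, ∑ y : V, (if F.Adj y x then (-RatFunc.X : RatFunc ℚ) else 0)
      = (-RatFunc.X) * ∑ x : V, ∑ y : V, (if F.Adj x y then (1 : RatFunc ℚ) else 0) := by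
    rw [Finset.sum_comm]
    rw [Finset.mul_sum]
    refine Finset.sum_congr rfl fun y _ => ?_
    rw [Finset.mul_sum]
    refine Finset.sum_congr rfl fun x _ => ?_
    by_cases h : F.Adj y x <;> simp [h]
  have htot : ∑ x : V, ∑ y, mInv F x y
      = (Fintype.card V : RatFunc ℚ) * (1 - RatFunc.X ^ 2)
        + (RatFunc.X ^ 2 - RatFunc.X)
          * ∑ x : V, ∑ y : V, (if F.Adj x y then (1 : RatFunc ℚ) else 0) := by
    rw [Finset.sum_congr rfl fun x _ => hrow x, Finset.sum_add_distrib, hS',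
      Finset.sum_add_distrib, Finset.sum_const, ← Finset.mul_sum, hS]
    simp only [nsmul_eq_mul, Finset.card_univ]
    ring
  rw [magnitude]
  simp only [hinv, Matrix.smul_apply, smul_eq_mul]
  simp_rw [← Finset.mul_sum]
  rw [htot]
  set S := ∑ x : V, ∑ y : V, (if F.Adj x y then (1 : RatFunc ℚ) else 0) with hSdef
  field_simp [one_sub_X_sq_ne_zero, one_add_X_ne_zero]
  ring

open scoped Classical in
/-- Converting a sum of adjacency indicators over a subgraph's vertex type to
a sum over the ambient vertex type. -/
lemma subgraph_adj_sum [Fintype V] {X : SimpleGraph V} (A : X.Subgraph) :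
    (∑ a : ↥A.verts, ∑ b : ↥A.verts, @ite _ (A.coe.Adj a b) (Classical.propDecidable _) (1 : RatFunc ℚ) 0)
      = ∑ x : V, ∑ y : V, (if A.Adj x y then (1 : RatFunc ℚ) else 0) := by
  have inner : ∀ x : V, (∑ b : ↥A.verts, if A.Adj x (↑b) then (1 : RatFunc ℚ) else 0)
      = ∑ y : V, (if A.Adj x y then (1 : RatFunc ℚ) else 0) := by
    intro x
    rw [← Finset.sum_subtype A.verts.toFinset (fun y => Set.mem_toFinset)
      (fun y => if A.Adj x y then (1 : RatFunc ℚ) else 0)]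
    refine Finset.sum_subset (Finset.subset_univ _) fun y _ hy => ?_
    rw [if_neg]
    intro hadj
    exact hy (Set.mem_toFinset.mpr (A.edge_vert hadj.symm))
  calc (∑ a : ↥A.verts, ∑ b : ↥A.verts, @ite _ (A.coe.Adj a b) (Classical.propDecidable _) (1 : RatFunc ℚ) 0)
      = ∑ a : ↥A.verts, ∑ y : V, (if A.Adj (↑a) y then (1 : RatFunc ℚ) else 0) := by
        refine Finset.sum_congr rfl fun a _ => ?_
        rw [← inner (↑a)]
        refine Finset.sum_congr rfl fun b _ => ?_
        congr 1
    _ = ∑ x : V, ∑ y : V, (if A.Adj x y then (1 : RatFunc ℚ) else 0) := by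
        rw [← Finset.sum_subtype A.verts.toFinset (fun x => Set.mem_toFinset)
          (fun x => ∑ y : V, if A.Adj x y then (1 : RatFunc ℚ) else 0)]
        refine Finset.sum_subset (Finset.subset_univ _) fun x _ hx => ?_
        refine Finset.sum_eq_zero fun y _ => ?_
        rw [if_neg]
        intro hadj
        exact hx (Set.mem_toFinset.mpr (A.edge_vert hadj))

/-- A subgraph of an acyclic graph is acyclic. -/
lemma subgraph_coe_acyclic {X : SimpleGraph V} (hX : X.IsAcyclic) (A : X.Subgraph) :
    A.coe.IsAcyclic := by
  intro v c hc
  exact hX (c.map A.hom) (hc.map Subgraph.hom_injective)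

end MagnitudeAux

open scoped Classical in
/-- Inclusion-exclusion for magnitude holds for subtrees of a tree:
if `X` is a tree and `G`, `H` are subtrees with `G ∪ H = T`, then
`|X| = |G| + |H| - |G ∩ H|`. -/
theorem magnitude_union_of_trees
    {V : Type*} [Fintype V] [DecidableEq V] (X : SimpleGraph V) (hX : X.IsTree)
    (G H : X.Subgraph) (hG : G.coe.IsTree) (hH : H.coe.IsTree) (hGH : G ⊔ H = ⊤) :
    magnitude X = magnitude G.coe + magnitude H.coe - magnitude (G ⊓ H).coe := by
  classical
  have hXa : X.IsAcyclic := ((SimpleGraph.isTree_iff X).mp hX).2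
  have hGa : G.coe.IsAcyclic := ((SimpleGraph.isTree_iff _).mp hG).2
  have hHa : H.coe.IsAcyclic := ((SimpleGraph.isTree_iff _).mp hH).2
  have hIa : (G ⊓ H).coe.IsAcyclic := MagnitudeAux.subgraph_coe_acyclic hXa _
  rw [MagnitudeAux.magnitude_acyclic hXa, MagnitudeAux.magnitude_acyclic hGa,
    MagnitudeAux.magnitude_acyclic hHa, MagnitudeAux.magnitude_acyclic hIa]
  rw [MagnitudeAux.subgraph_adj_sum G, MagnitudeAux.subgraph_adj_sum H,
    MagnitudeAux.subgraph_adj_sum (G ⊓ H)]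
  -- vertex count inclusion–exclusion
  have hvuniv : G.verts ∪ H.verts = Set.univ := by
    rw [← SimpleGraph.Subgraph.verts_sup, hGH, SimpleGraph.Subgraph.verts_top]
  have hn : (Fintype.card V : RatFunc ℚ) + (Fintype.card ↥(G ⊓ H).verts : RatFunc ℚ)
      = (Fintype.card ↥G.verts : RatFunc ℚ) + (Fintype.card ↥H.verts : RatFunc ℚ) := by
    have hnat : Fintype.card V + Fintype.card ↥(G ⊓ H).verts
        = Fintype.card ↥G.verts + Fintype.card ↥H.verts := by
      have hfinU : G.verts.toFinset ∪ H.verts.toFinset = (Finset.univ : Finset V) := by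
        ext v
        simp only [Finset.mem_union, Set.mem_toFinset, Finset.mem_univ, iff_true]
        have hv : v ∈ G.verts ∪ H.verts := by rw [hvuniv]; trivial
        exact hv
      have hfinI : (G ⊓ H).verts.toFinset = G.verts.toFinset ∩ H.verts.toFinset := by
        ext v
        simp [SimpleGraph.Subgraph.verts_inf]
      rw [← Set.toFinset_card G.verts, ← Set.toFinset_card H.verts,
        ← Set.toFinset_card (G ⊓ H).verts, hfinI,
        ← Finset.card_union_add_card_inter, hfinU, Finset.card_univ]
    exact_mod_cast congrArg (fun n : ℕ => (n : RatFunc ℚ)) hnat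
  -- adjacency count inclusion–exclusion
  have hadj : ∀ x y : V, (if X.Adj x y then (1 : RatFunc ℚ) else 0)
      + (if (G ⊓ H).Adj x y then (1 : RatFunc ℚ) else 0)
      = (if G.Adj x y then (1 : RatFunc ℚ) else 0)
        + (if H.Adj x y then (1 : RatFunc ℚ) else 0) := by
    intro x y
    have hx : X.Adj x y ↔ G.Adj x y ∨ H.Adj x y := by
      rw [← SimpleGraph.Subgraph.sup_adj, hGH, SimpleGraph.Subgraph.top_adj]
    have hi : (G ⊓ H).Adj x y ↔ G.Adj x y ∧ H.Adj x y := SimpleGraph.Subgraph.inf_adj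
    by_cases hg : G.Adj x y <;> by_cases hh : H.Adj x y <;>
      simp [hx, hi, hg, hh]
  have hSeq : (∑ x : V, ∑ y : V, (if X.Adj x y then (1 : RatFunc ℚ) else 0))
      + (∑ x : V, ∑ y : V, (if (G ⊓ H).Adj x y then (1 : RatFunc ℚ) else 0))
      = (∑ x : V, ∑ y : V, (if G.Adj x y then (1 : RatFunc ℚ) else 0))
        + (∑ x : V, ∑ y : V, (if H.Adj x y then (1 : RatFunc ℚ) else 0)) := by
    rw [← Finset.sum_add_distrib, ← Finset.sum_add_distrib]
    refine Finset.sum_congr rfl fun x _ => ?_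
    rw [← Finset.sum_add_distrib, ← Finset.sum_add_distrib]
    exact Finset.sum_congr rfl fun y _ => hadj x y
  linear_combination hn - (RatFunc.X / (1 + RatFunc.X)) * hSeq
end
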